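/- arXiv:2003.03013 — 11 statements merged into one kernel-verified Lean document; each statement's English description precedes it below -/
import Mathlib

section
/- Let L be a bounded lattice, a ∈ L \ {0,1}, and let T₁ : [a,1]² → [a,1], T₂ : [0,a]² → [0,a] be binary operations. Define T : L² → L by: T(x,y) = T₁(x,y) if x,y ∈ [a,1); T(x,y) = T₂(x,y) if x,y ∈ [0,a); T(x,y) = x ∧ y if (x,y) ∈ ([0,a) × [a,1)) ∪ ([a,1) × [0,a)) ∪ (L × {1}) ∪ ({1} × L); and T(x,y) = T₂(x ∧ a, y ∧ a) otherwise. If T is increasing in both variables, then T₁(x,y) ≤ x ∧ y for all x, y ∈ [a,1) and T₂(x,y) ≤ x ∧ y for all x, y ∈ [0,a). -/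
open Classical in
/-- The ordinal sum of two binary operations `T₁` (on `[a,1]`) and `T₂` (on `[0,a]`)
on a bounded lattice, in the sense of Ertuğrul and Yeşilyurt (formula (2) of the paper):
`T₁` on `[a,1)²`, `T₂` on `[0,a)²`, the meet on the mixed blocks and when `1 ∈ {x,y}`,
and `T₂(x ⊓ a, y ⊓ a)` otherwise. -/
noncomputable def ordinalSum {L : Type*} [Lattice L] [BoundedOrder L]
    (a : L) (T₁ T₂ : L → L → L) (x y : L) : L :=
  if (a ≤ x ∧ x < ⊤) ∧ (a ≤ y ∧ y < ⊤) then T₁ x y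
  else if x < a ∧ y < a then T₂ x y
  else if (x < a ∧ a ≤ y ∧ y < ⊤) ∨ ((a ≤ x ∧ x < ⊤) ∧ y < a) ∨ y = ⊤ ∨ x = ⊤ then x ⊓ y
  else T₂ (x ⊓ a) (y ⊓ a)

/-- If the ordinal sum `T` of binary operations `T₁ : [a,1]² → [a,1]` and
`T₂ : [0,a]² → [0,a]` is increasing in both variables, then `T₁(x,y) ≤ x ⊓ y` on `[a,1)²`
and `T₂(x,y) ≤ x ⊓ y` on `[0,a)²`. -/
theorem stmt_2 {L : Type*} [Lattice L] [BoundedOrder L] (a : L)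
    (ha0 : a ≠ ⊥) (ha1 : a ≠ ⊤) (T₁ T₂ : L → L → L)
    (hT₁mem : ∀ x y, a ≤ x → a ≤ y → a ≤ T₁ x y)
    (hT₂mem : ∀ x y, x ≤ a → y ≤ a → T₂ x y ≤ a)
    (hmono : ∀ x y z : L, x ≤ y →
      ordinalSum a T₁ T₂ x z ≤ ordinalSum a T₁ T₂ y z ∧
      ordinalSum a T₁ T₂ z x ≤ ordinalSum a T₁ T₂ z y) :
    (∀ x y, a ≤ x → x < ⊤ → a ≤ y → y < ⊤ → T₁ x y ≤ x ⊓ y) ∧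
    (∀ x y, x < a → y < a → T₂ x y ≤ x ⊓ y) := by
  have haT : a < ⊤ := lt_top_iff_ne_top.2 ha1
  have h1 : ∀ x y : L, (a ≤ x ∧ x < ⊤) ∧ (a ≤ y ∧ y < ⊤) →
      ordinalSum a T₁ T₂ x y = T₁ x y := by
    intro x y h; simp only [ordinalSum, if_pos h]
  have h2 : ∀ x y : L, x < a → y < a → ordinalSum a T₁ T₂ x y = T₂ x y := by
    intro x y hx hy
    have : ¬ ((a ≤ x ∧ x < ⊤) ∧ (a ≤ y ∧ y < ⊤)) := by
      rintro ⟨⟨h, -⟩, -⟩; exact absurd h (not_le_of_gt hx)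
    have hc : x < a ∧ y < a := ⟨hx, hy⟩
    simp only [ordinalSum, if_neg this, if_pos hc]
  have htop : ∀ x : L, ordinalSum a T₁ T₂ x ⊤ = x := by
    intro x
    have h1 : ¬ ((a ≤ x ∧ x < ⊤) ∧ (a ≤ (⊤:L) ∧ (⊤:L) < ⊤)) := by
      rintro ⟨-, -, h⟩; exact lt_irrefl _ h
    have h2 : ¬ (x < a ∧ (⊤:L) < a) := by
      rintro ⟨-, h⟩; exact absurd le_top (not_le_of_gt h)
    simp only [ordinalSum, if_neg h1, if_neg h2, if_pos (Or.inr (Or.inr (Or.inl rfl))),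
      inf_top_eq]
  have htop' : ∀ y : L, ordinalSum a T₁ T₂ ⊤ y = y := by
    intro y
    have h1 : ¬ ((a ≤ (⊤:L) ∧ (⊤:L) < ⊤) ∧ (a ≤ y ∧ y < ⊤)) := by
      rintro ⟨⟨-, h⟩, -⟩; exact lt_irrefl _ h
    have h2 : ¬ ((⊤:L) < a ∧ y < a) := by
      rintro ⟨h, -⟩; exact absurd le_top (not_le_of_gt h)
    simp only [ordinalSum, if_neg h1, if_neg h2, if_pos (Or.inr (Or.inr (Or.inr rfl))),
      top_inf_eq]
  have ha : ∀ x : L, x < a → ordinalSum a T₁ T₂ x a = x := by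
    intro x hx
    have h1 : ¬ ((a ≤ x ∧ x < ⊤) ∧ (a ≤ a ∧ a < ⊤)) := by
      rintro ⟨⟨h, -⟩, -⟩; exact absurd h (not_le_of_gt hx)
    have h2 : ¬ (x < a ∧ a < a) := by rintro ⟨-, h⟩; exact lt_irrefl _ h
    have hc : x < a ∧ a ≤ a ∧ a < ⊤ ∨ (a ≤ x ∧ x < ⊤) ∧ a < a ∨ a = ⊤ ∨ x = ⊤ :=
      Or.inl ⟨hx, le_rfl, haT⟩
    simp only [ordinalSum, if_neg h1, if_neg h2, if_pos hc]
    exact inf_eq_left.2 hx.le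
  have ha' : ∀ y : L, y < a → ordinalSum a T₁ T₂ a y = y := by
    intro y hy
    have h1 : ¬ ((a ≤ a ∧ a < ⊤) ∧ (a ≤ y ∧ y < ⊤)) := by
      rintro ⟨-, h, -⟩; exact absurd h (not_le_of_gt hy)
    have h2 : ¬ (a < a ∧ y < a) := by rintro ⟨h, -⟩; exact lt_irrefl _ h
    have hc : a < a ∧ a ≤ y ∧ y < ⊤ ∨ (a ≤ a ∧ a < ⊤) ∧ y < a ∨ y = ⊤ ∨ a = ⊤ :=
      Or.inr (Or.inl ⟨⟨le_rfl, haT⟩, hy⟩)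
    simp only [ordinalSum, if_neg h1, if_neg h2, if_pos hc]
    exact inf_eq_right.2 hy.le
  constructor
  · intro x y hax hxt hay hyt
    have e : ordinalSum a T₁ T₂ x y = T₁ x y := h1 x y ⟨⟨hax, hxt⟩, ⟨hay, hyt⟩⟩
    refine le_inf ?_ ?_
    · have := (hmono y ⊤ x le_top).2
      rwa [e, htop x] at this
    · have := (hmono x ⊤ y le_top).1
      rwa [e, htop' y] at this
  · intro x y hx hy
    have e : ordinalSum a T₁ T₂ x y = T₂ x y := h2 x y hx hy
    refine le_inf ?_ ?_
    · have := (hmono y a x hy.le).2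
      rwa [e, ha x hx] at this
    · have := (hmono x a y hx.le).1
      rwa [e, ha' y hy] at this
end

section
/- Let L be a bounded lattice, a ∈ L \ {0,1}, and T₁ : [a,1]² → [a,1], T₂ : [0,a]² → [0,a] be commutative binary operations satisfying T₁(x,y) ≤ x ∧ y on [a,1]² and T₂(x,y) ≤ x ∧ y on [0,a]². Define T : L² → L as in the ordinal sum formula (T₁ on [a,1)², T₂ on [0,a)², x ∧ y on mixed blocks and when 1 ∈ {x,y}, and T₂(x ∧ a, y ∧ a) otherwise). If T is increasing in both variables, then for every x ∈ L incomparable with a, T₂(x ∧ a, a) = x ∧ a. -/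
/-- if the ordinal sum `T` of commutative operations `T₁, T₂` bounded by the
meet is increasing in both variables, then `T₂(x ⊓ a, a) = x ⊓ a` for every `x`
incomparable with `a`. -/
theorem stmt_5 {L : Type*} [Lattice L] [BoundedOrder L] (a : L)
    (ha0 : a ≠ ⊥) (ha1 : a ≠ ⊤) (T₁ T₂ : L → L → L)
    (hT₁mem : ∀ x y, a ≤ x → a ≤ y → a ≤ T₁ x y)
    (hT₂mem : ∀ x y, x ≤ a → y ≤ a → T₂ x y ≤ a)
    (hT₁comm : ∀ x y, a ≤ x → a ≤ y → T₁ x y = T₁ y x)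
    (hT₂comm : ∀ x y, x ≤ a → y ≤ a → T₂ x y = T₂ y x)
    (hT₁le : ∀ x y, a ≤ x → a ≤ y → T₁ x y ≤ x ⊓ y)
    (hT₂le : ∀ x y, x ≤ a → y ≤ a → T₂ x y ≤ x ⊓ y)
    (hmono : ∀ x y z : L, x ≤ y →
      ordinalSum a T₁ T₂ x z ≤ ordinalSum a T₁ T₂ y z ∧
      ordinalSum a T₁ T₂ z x ≤ ordinalSum a T₁ T₂ z y) :
    ∀ x : L, ¬ x ≤ a → ¬ a ≤ x → T₂ (x ⊓ a) a = x ⊓ a := by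
  intro x hxa hax
  have hxtop : x ≠ ⊤ := fun h => hax (h ▸ le_top)
  have hm_lt : x ⊓ a < a := lt_of_le_of_ne inf_le_right (fun h => hax (by
    exact (inf_eq_right.mp h)))
  have ha_lt : a < ⊤ := lt_top_iff_ne_top.mpr ha1
  have h1 : ordinalSum a T₁ T₂ (x ⊓ a) a = x ⊓ a := by
    unfold ordinalSum
    rw [if_neg, if_neg, if_pos]
    · simp
    · exact Or.inl ⟨hm_lt, le_refl a, ha_lt⟩
    · exact fun h => absurd h.2 (lt_irrefl a)
    · exact fun h => absurd h.1.1 (not_le_of_gt hm_lt)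
  have h2 : ordinalSum a T₁ T₂ x a = T₂ (x ⊓ a) a := by
    unfold ordinalSum
    rw [if_neg, if_neg, if_neg]
    · rw [inf_idem]
    · rintro (⟨h, _⟩ | ⟨⟨h, _⟩, _⟩ | h | h)
      · exact hxa h.le
      · exact hax h
      · exact ha1 h
      · exact hxtop h
    · exact fun h => hxa h.1.le
    · exact fun h => hax h.1.1
  have := (hmono (x ⊓ a) x a inf_le_left).1
  rw [h1, h2] at this
  exact le_antisymm (le_trans (hT₂le _ _ inf_le_right le_rfl) inf_le_left) this
end

section
/- Let L be a bounded lattice, a ∈ L \ {0,1}, and T₁ : [a,1]² → [a,1], T₂ : [0,a]² → [0,a] be commutative binary operations with T₁(x,y) ≤ x ∧ y on [a,1]² and T₂(x,y) ≤ x ∧ y on [0,a]². Suppose T₁ is increasing in both variables on [a,1), T₂ is increasing in both variables on [0,a), and T₂(z ∧ a, a) = z ∧ a for every z incomparable with a. Then the ordinal sum T : L² → L (defined by T₁ on [a,1)², T₂ on [0,a)², x ∧ y on mixed blocks and when 1 ∈ {x,y}, and T₂(x ∧ a, y ∧ a) otherwise) is increasing in both variables on L. -/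
section OSAux

variable {L : Type*} [Lattice L] [BoundedOrder L] {a : L} {T₁ T₂ : L → L → L}

private lemma os_classify (a u : L) :
    u = ⊤ ∨ (a ≤ u ∧ u < ⊤) ∨ u < a ∨ (¬ u ≤ a ∧ ¬ a ≤ u) := by
  by_cases h : u = ⊤
  · exact Or.inl h
  by_cases h1 : a ≤ u
  · exact Or.inr (Or.inl ⟨h1, lt_top_iff_ne_top.mpr h⟩)
  by_cases h2 : u ≤ a
  · exact Or.inr (Or.inr (Or.inl (h2.lt_of_ne fun e => h1 e.ge)))
  · exact Or.inr (Or.inr (Or.inr ⟨h2, h1⟩))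

private lemma os1 {x z : L} (hx : a ≤ x) (hx' : x < ⊤) (hz : a ≤ z) (hz' : z < ⊤) :
    ordinalSum a T₁ T₂ x z = T₁ x z := by
  unfold ordinalSum
  rw [if_pos ⟨⟨hx, hx'⟩, hz, hz'⟩]

private lemma os2 {x z : L} (hx : x < a) (hz : z < a) :
    ordinalSum a T₁ T₂ x z = T₂ x z := by
  unfold ordinalSum
  rw [if_neg (fun h => absurd (h.1.1.trans_lt hx) (lt_irrefl a)), if_pos ⟨hx, hz⟩]

private lemma os3 {x z : L} (hx : x < a) (hz : a ≤ z) (hz' : z < ⊤) :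
    ordinalSum a T₁ T₂ x z = x ⊓ z := by
  unfold ordinalSum
  rw [if_neg (fun h => absurd (h.1.1.trans_lt hx) (lt_irrefl a)),
    if_neg (fun h => absurd (hz.trans_lt h.2) (lt_irrefl a)),
    if_pos (Or.inl ⟨hx, hz, hz'⟩)]

private lemma os3' {x z : L} (hx : a ≤ x) (hx' : x < ⊤) (hz : z < a) :
    ordinalSum a T₁ T₂ x z = x ⊓ z := by
  unfold ordinalSum
  rw [if_neg (fun h => absurd (h.2.1.trans_lt hz) (lt_irrefl a)),
    if_neg (fun h => absurd (hx.trans_lt h.1) (lt_irrefl a)),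
    if_pos (Or.inr (Or.inl ⟨⟨hx, hx'⟩, hz⟩))]

private lemma osTL (z : L) : ordinalSum a T₁ T₂ ⊤ z = z := by
  unfold ordinalSum
  rw [if_neg (fun h => lt_irrefl ⊤ h.1.2), if_neg (fun h => not_top_lt h.1),
    if_pos (Or.inr (Or.inr (Or.inr rfl))), top_inf_eq]

private lemma osTR (x : L) : ordinalSum a T₁ T₂ x ⊤ = x := by
  unfold ordinalSum
  rw [if_neg (fun h => lt_irrefl ⊤ h.2.2), if_neg (fun h => not_top_lt h.2),
    if_pos (Or.inr (Or.inr (Or.inl rfl))), inf_top_eq]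

private lemma osDB {x z : L} (hx1 : ¬ x ≤ a) (hx2 : ¬ a ≤ x) (hz : z < a) :
    ordinalSum a T₁ T₂ x z = T₂ (x ⊓ a) z := by
  have n3 : ¬((x < a ∧ a ≤ z ∧ z < ⊤) ∨ ((a ≤ x ∧ x < ⊤) ∧ z < a) ∨ z = ⊤ ∨ x = ⊤) := by
    rintro (⟨h, _⟩ | ⟨⟨h, _⟩, _⟩ | h | h)
    · exact hx1 h.le
    · exact hx2 h
    · exact not_top_lt (h ▸ hz)
    · exact hx2 (le_top.trans h.ge)
  unfold ordinalSum
  rw [if_neg (fun h => hx2 h.1.1), if_neg (fun h => hx1 h.1.le), if_neg n3,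
    inf_eq_left.mpr hz.le]

private lemma osBD {x z : L} (hx : x < a) (hz1 : ¬ z ≤ a) (hz2 : ¬ a ≤ z) :
    ordinalSum a T₁ T₂ x z = T₂ x (z ⊓ a) := by
  have n3 : ¬((x < a ∧ a ≤ z ∧ z < ⊤) ∨ ((a ≤ x ∧ x < ⊤) ∧ z < a) ∨ z = ⊤ ∨ x = ⊤) := by
    rintro (⟨_, h, _⟩ | ⟨⟨h, _⟩, _⟩ | h | h)
    · exact hz2 h
    · exact absurd (h.trans_lt hx) (lt_irrefl a)
    · exact hz2 (le_top.trans h.ge)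
    · exact not_top_lt (h ▸ hx)
  unfold ordinalSum
  rw [if_neg (fun h => absurd (h.1.1.trans_lt hx) (lt_irrefl a)),
    if_neg (fun h => hz1 h.2.le), if_neg n3, inf_eq_left.mpr hx.le]

private lemma osDA {x z : L} (hx1 : ¬ x ≤ a) (hx2 : ¬ a ≤ x) (hz : a ≤ z) (hz' : z < ⊤) :
    ordinalSum a T₁ T₂ x z = T₂ (x ⊓ a) a := by
  have n3 : ¬((x < a ∧ a ≤ z ∧ z < ⊤) ∨ ((a ≤ x ∧ x < ⊤) ∧ z < a) ∨ z = ⊤ ∨ x = ⊤) := by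
    rintro (⟨h, _⟩ | ⟨_, h⟩ | h | h)
    · exact hx1 h.le
    · exact absurd (hz.trans_lt h) (lt_irrefl a)
    · exact absurd h hz'.ne
    · exact hx2 (le_top.trans h.ge)
  unfold ordinalSum
  rw [if_neg (fun h => hx2 h.1.1),
    if_neg (fun h => absurd (hz.trans_lt h.2) (lt_irrefl a)), if_neg n3,
    inf_eq_right.mpr hz]

private lemma osAD {x z : L} (hx : a ≤ x) (hx' : x < ⊤) (hz1 : ¬ z ≤ a) (hz2 : ¬ a ≤ z) :
    ordinalSum a T₁ T₂ x z = T₂ a (z ⊓ a) := by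
  have n3 : ¬((x < a ∧ a ≤ z ∧ z < ⊤) ∨ ((a ≤ x ∧ x < ⊤) ∧ z < a) ∨ z = ⊤ ∨ x = ⊤) := by
    rintro (⟨h, _⟩ | ⟨_, h⟩ | h | h)
    · exact absurd (hx.trans_lt h) (lt_irrefl a)
    · exact hz1 h.le
    · exact hz2 (le_top.trans h.ge)
    · exact absurd h hx'.ne
  unfold ordinalSum
  rw [if_neg (fun h => hz2 h.2.1),
    if_neg (fun h => absurd (hx.trans_lt h.1) (lt_irrefl a)), if_neg n3,
    inf_eq_right.mpr hx]

private lemma osDD {x z : L} (hx1 : ¬ x ≤ a) (hx2 : ¬ a ≤ x) (hz1 : ¬ z ≤ a)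
    (hz2 : ¬ a ≤ z) : ordinalSum a T₁ T₂ x z = T₂ (x ⊓ a) (z ⊓ a) := by
  have n3 : ¬((x < a ∧ a ≤ z ∧ z < ⊤) ∨ ((a ≤ x ∧ x < ⊤) ∧ z < a) ∨ z = ⊤ ∨ x = ⊤) := by
    rintro (⟨h, _⟩ | ⟨⟨h, _⟩, _⟩ | h | h)
    · exact hx1 h.le
    · exact hx2 h
    · exact hz2 (le_top.trans h.ge)
    · exact hx2 (le_top.trans h.ge)
  unfold ordinalSum
  rw [if_neg (fun h => hx2 h.1.1), if_neg (fun h => hx1 h.1.le), if_neg n3]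

end OSAux

/-- sufficiency direction of the increasingness theorem. If `T₁, T₂` are
commutative, bounded by the meet, increasing on `[a,1)` and `[0,a)` respectively, and
`T₂(z ⊓ a, a) = z ⊓ a` for every `z` incomparable with `a`, then the ordinal sum `T` is
increasing in both variables on `L`. -/
theorem stmt_6 {L : Type*} [Lattice L] [BoundedOrder L] (a : L)
    (ha0 : a ≠ ⊥) (ha1 : a ≠ ⊤) (T₁ T₂ : L → L → L)
    (hT₁mem : ∀ x y, a ≤ x → a ≤ y → a ≤ T₁ x y)
    (hT₂mem : ∀ x y, x ≤ a → y ≤ a → T₂ x y ≤ a)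
    (hT₁comm : ∀ x y, a ≤ x → a ≤ y → T₁ x y = T₁ y x)
    (hT₂comm : ∀ x y, x ≤ a → y ≤ a → T₂ x y = T₂ y x)
    (hT₁le : ∀ x y, a ≤ x → a ≤ y → T₁ x y ≤ x ⊓ y)
    (hT₂le : ∀ x y, x ≤ a → y ≤ a → T₂ x y ≤ x ⊓ y)
    (hT₁mono : ∀ x y z, a ≤ x → x < ⊤ → a ≤ y → y < ⊤ → a ≤ z → z < ⊤ → x ≤ y →
      T₁ x z ≤ T₁ y z ∧ T₁ z x ≤ T₁ z y)
    (hT₂mono : ∀ x y z, x < a → y < a → z < a → x ≤ y →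
      T₂ x z ≤ T₂ y z ∧ T₂ z x ≤ T₂ z y)
    (hIa : ∀ z : L, ¬ z ≤ a → ¬ a ≤ z → T₂ (z ⊓ a) a = z ⊓ a) :
    ∀ x y z : L, x ≤ y →
      ordinalSum a T₁ T₂ x z ≤ ordinalSum a T₁ T₂ y z ∧
      ordinalSum a T₁ T₂ z x ≤ ordinalSum a T₁ T₂ z y := by
  -- T is bounded above by the meet
  have osle : ∀ x z : L, ordinalSum a T₁ T₂ x z ≤ x ⊓ z := by
    intro x z
    rcases os_classify a x with hx | ⟨hx, hx'⟩ | hx | ⟨hx1, hx2⟩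
    · subst hx; rw [osTL]; exact le_inf le_top le_rfl
    · rcases os_classify a z with hz | ⟨hz, hz'⟩ | hz | ⟨hz1, hz2⟩
      · subst hz; rw [osTR]; exact le_inf le_rfl le_top
      · rw [os1 hx hx' hz hz']; exact hT₁le x z hx hz
      · rw [os3' hx hx' hz]
      · rw [osAD hx hx' hz1 hz2]
        exact (hT₂le a (z ⊓ a) le_rfl inf_le_right).trans
          (le_inf (inf_le_left.trans hx) (inf_le_right.trans inf_le_left))
    · rcases os_classify a z with hz | ⟨hz, hz'⟩ | hz | ⟨hz1, hz2⟩
      · subst hz; rw [osTR]; exact le_inf le_rfl le_top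
      · rw [os3 hx hz hz']
      · rw [os2 hx hz]; exact hT₂le x z hx.le hz.le
      · rw [osBD hx hz1 hz2]
        exact (hT₂le x (z ⊓ a) hx.le inf_le_right).trans
          (le_inf inf_le_left (inf_le_right.trans inf_le_left))
    · rcases os_classify a z with hz | ⟨hz, hz'⟩ | hz | ⟨hz1, hz2⟩
      · subst hz; rw [osTR]; exact le_inf le_rfl le_top
      · rw [osDA hx1 hx2 hz hz']
        exact (hT₂le (x ⊓ a) a inf_le_right le_rfl).trans
          (le_inf (inf_le_left.trans inf_le_left) (inf_le_right.trans hz))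
      · rw [osDB hx1 hx2 hz]
        exact (hT₂le (x ⊓ a) z inf_le_right hz.le).trans
          (inf_le_inf_right z inf_le_left)
      · rw [osDD hx1 hx2 hz1 hz2]
        exact (hT₂le _ _ inf_le_right inf_le_right).trans
          (inf_le_inf inf_le_left inf_le_left)
  -- T is commutative
  have comm : ∀ u v : L, ordinalSum a T₁ T₂ u v = ordinalSum a T₁ T₂ v u := by
    intro u v
    rcases os_classify a u with hu | ⟨hu, hu'⟩ | hu | ⟨hu1, hu2⟩
    · subst hu; rw [osTL, osTR]
    all_goals rcases os_classify a v with hv | ⟨hv, hv'⟩ | hv | ⟨hv1, hv2⟩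
    · subst hv; rw [osTL, osTR]
    · rw [os1 hu hu' hv hv', os1 hv hv' hu hu']; exact hT₁comm u v hu hv
    · rw [os3' hu hu' hv, os3 hv hu hu', inf_comm]
    · rw [osAD hu hu' hv1 hv2, osDA hv1 hv2 hu hu']
      exact hT₂comm a (v ⊓ a) le_rfl inf_le_right
    · subst hv; rw [osTL, osTR]
    · rw [os3 hu hv hv', os3' hv hv' hu, inf_comm]
    · rw [os2 hu hv, os2 hv hu]; exact hT₂comm u v hu.le hv.le
    · rw [osBD hu hv1 hv2, osDB hv1 hv2 hu]
      exact hT₂comm u (v ⊓ a) hu.le inf_le_right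
    · subst hv; rw [osTL, osTR]
    · rw [osDA hu1 hu2 hv hv', osAD hv hv' hu1 hu2]
      exact hT₂comm (u ⊓ a) a inf_le_right le_rfl
    · rw [osDB hu1 hu2 hv, osBD hv hu1 hu2]
      exact hT₂comm (u ⊓ a) v inf_le_right hv.le
    · rw [osDD hu1 hu2 hv1 hv2, osDD hv1 hv2 hu1 hu2]
      exact hT₂comm (u ⊓ a) (v ⊓ a) inf_le_right inf_le_right
  -- monotonicity in the first argument
  have key : ∀ x y z : L, x ≤ y → ordinalSum a T₁ T₂ x z ≤ ordinalSum a T₁ T₂ y z := by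
    intro x y z hxy
    rcases os_classify a z with hz | ⟨hz, hz'⟩ | hz | ⟨hz1, hz2⟩
    -- z = ⊤
    · subst hz; rw [osTR, osTR]; exact hxy
    -- a ≤ z < ⊤
    · by_cases hy : y = ⊤
      · subst hy; rw [osTL]
        exact (osle x z).trans inf_le_right
      have hy' : y < ⊤ := lt_top_iff_ne_top.mpr hy
      rcases os_classify a x with hx | ⟨hx, hx'⟩ | hx | ⟨hx1, hx2⟩
      · exact absurd (top_le_iff.mp (hx ▸ hxy)) hy
      · have hay : a ≤ y := hx.trans hxy
        rw [os1 hx hx' hz hz', os1 hay hy' hz hz']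
        exact (hT₁mono x y z hx hx' hay hy' hz hz' hxy).1
      · rw [os3 hx hz hz']
        rcases os_classify a y with hyy | ⟨hyy, hyy'⟩ | hyy | ⟨hy1, hy2⟩
        · exact absurd hyy hy
        · rw [os1 hyy hyy' hz hz']
          exact inf_le_left.trans (hx.le.trans (hT₁mem y z hyy hz))
        · rw [os3 hyy hz hz']; exact inf_le_inf_right z hxy
        · rw [osDA hy1 hy2 hz hz', hIa y hy1 hy2]
          exact le_inf (inf_le_left.trans hxy) (inf_le_left.trans hx.le)
      · rw [osDA hx1 hx2 hz hz', hIa x hx1 hx2]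
        rcases os_classify a y with hyy | ⟨hyy, hyy'⟩ | hyy | ⟨hy1, hy2⟩
        · exact absurd hyy hy
        · rw [os1 hyy hyy' hz hz']
          exact inf_le_right.trans (hT₁mem y z hyy hz)
        · exact absurd (hxy.trans hyy.le) hx1
        · rw [osDA hy1 hy2 hz hz', hIa y hy1 hy2]
          exact inf_le_inf_right a hxy
    -- z < a
    · by_cases hy : y = ⊤
      · subst hy; rw [osTL]
        exact (osle x z).trans inf_le_right
      have hy' : y < ⊤ := lt_top_iff_ne_top.mpr hy
      rcases os_classify a x with hx | ⟨hx, hx'⟩ | hx | ⟨hx1, hx2⟩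
      · exact absurd (top_le_iff.mp (hx ▸ hxy)) hy
      · have hay : a ≤ y := hx.trans hxy
        rw [os3' hx hx' hz, os3' hay hy' hz]
        exact inf_le_inf_right z hxy
      · rw [os2 hx hz]
        rcases os_classify a y with hyy | ⟨hyy, hyy'⟩ | hyy | ⟨hy1, hy2⟩
        · exact absurd hyy hy
        · rw [os3' hyy hyy' hz]
          exact (hT₂le x z hx.le hz.le).trans (inf_le_inf_right z hxy)
        · rw [os2 hyy hz]
          exact (hT₂mono x y z hx hyy hz hxy).1
        · rw [osDB hy1 hy2 hz]
          have hya : y ⊓ a < a := inf_le_right.lt_of_ne fun e => hy2 (e ▸ inf_le_left)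
          exact (hT₂mono x (y ⊓ a) z hx hya hz (le_inf hxy hx.le)).1
      · rw [osDB hx1 hx2 hz]
        have hxa : x ⊓ a < a := inf_le_right.lt_of_ne fun e => hx2 (e ▸ inf_le_left)
        rcases os_classify a y with hyy | ⟨hyy, hyy'⟩ | hyy | ⟨hy1, hy2⟩
        · exact absurd hyy hy
        · rw [os3' hyy hyy' hz]
          exact ((hT₂le (x ⊓ a) z inf_le_right hz.le).trans inf_le_right).trans
            (le_inf (hz.le.trans hyy) le_rfl)
        · exact absurd (hxy.trans hyy.le) hx1
        · rw [osDB hy1 hy2 hz]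
          have hya : y ⊓ a < a := inf_le_right.lt_of_ne fun e => hy2 (e ▸ inf_le_left)
          exact (hT₂mono (x ⊓ a) (y ⊓ a) z hxa hya hz (inf_le_inf_right a hxy)).1
    -- z incomparable with a
    · by_cases hy : y = ⊤
      · subst hy; rw [osTL]
        exact (osle x z).trans inf_le_right
      have hy' : y < ⊤ := lt_top_iff_ne_top.mpr hy
      have hx' : x < ⊤ := lt_of_le_of_lt hxy hy'
      have hza : z ⊓ a < a := inf_le_right.lt_of_ne fun e => hz2 (e ▸ inf_le_left)
      have osD : ∀ w : L, w < ⊤ → ordinalSum a T₁ T₂ w z = T₂ (w ⊓ a) (z ⊓ a) := by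
        intro w hw
        rcases os_classify a w with hww | ⟨hww, hww'⟩ | hww | ⟨hw1, hw2⟩
        · exact absurd hww hw.ne
        · rw [osAD hww hww' hz1 hz2, inf_eq_right.mpr hww]
        · rw [osBD hww hz1 hz2, inf_eq_left.mpr hww.le]
        · rw [osDD hw1 hw2 hz1 hz2]
      rw [osD x hx', osD y hy']
      by_cases hay : a ≤ y
      · rw [inf_eq_right.mpr hay, hT₂comm a (z ⊓ a) le_rfl inf_le_right, hIa z hz1 hz2]
        exact (hT₂le (x ⊓ a) (z ⊓ a) inf_le_right inf_le_right).trans inf_le_right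
      · have hya : y ⊓ a < a := inf_le_right.lt_of_ne fun e => hay (e ▸ inf_le_left)
        have hxa : x ⊓ a < a := lt_of_le_of_lt (inf_le_inf_right a hxy) hya
        exact (hT₂mono (x ⊓ a) (y ⊓ a) (z ⊓ a) hxa hya hza (inf_le_inf_right a hxy)).1
  intro x y z hxy
  refine ⟨key x y z hxy, ?_⟩
  rw [comm z x, comm z y]
  exact key x y z hxy
end

section
/- Let L be a bounded lattice, a ∈ L \ {0,1}, and T₁ : [a,1]² → [a,1], T₂ : [0,a]² → [0,a] be commutative binary operations with T₁(x,y) ≤ x ∧ y and T₂(x,y) ≤ x ∧ y on their domains. Suppose T₁ is increasing on [a,1)², T₂ is increasing on [0,a)², and T₂(z ∧ a, a) = z ∧ a for all z ∥ a. Then the ordinal sum T satisfies T(x,y) ≤ x ∧ y for all x, y ∈ L. -/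
/-- under the hypotheses of the increasingness theorem, the ordinal sum is
bounded above by the meet: `T(x,y) ≤ x ⊓ y` for all `x, y ∈ L`. -/
theorem stmt_7 {L : Type*} [Lattice L] [BoundedOrder L] (a : L)
    (ha0 : a ≠ ⊥) (ha1 : a ≠ ⊤) (T₁ T₂ : L → L → L)
    (hT₁mem : ∀ x y, a ≤ x → a ≤ y → a ≤ T₁ x y)
    (hT₂mem : ∀ x y, x ≤ a → y ≤ a → T₂ x y ≤ a)
    (hT₁comm : ∀ x y, a ≤ x → a ≤ y → T₁ x y = T₁ y x)
    (hT₂comm : ∀ x y, x ≤ a → y ≤ a → T₂ x y = T₂ y x)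
    (hT₁le : ∀ x y, a ≤ x → a ≤ y → T₁ x y ≤ x ⊓ y)
    (hT₂le : ∀ x y, x ≤ a → y ≤ a → T₂ x y ≤ x ⊓ y)
    (hT₁mono : ∀ x y z, a ≤ x → x < ⊤ → a ≤ y → y < ⊤ → a ≤ z → z < ⊤ → x ≤ y →
      T₁ x z ≤ T₁ y z ∧ T₁ z x ≤ T₁ z y)
    (hT₂mono : ∀ x y z, x < a → y < a → z < a → x ≤ y →
      T₂ x z ≤ T₂ y z ∧ T₂ z x ≤ T₂ z y)
    (hIa : ∀ z : L, ¬ z ≤ a → ¬ a ≤ z → T₂ (z ⊓ a) a = z ⊓ a) :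
    ∀ x y : L, ordinalSum a T₁ T₂ x y ≤ x ⊓ y := by
  intro x y
  unfold ordinalSum
  split_ifs with h1 h2 h3
  · exact hT₁le x y h1.1.1 h1.2.1
  · exact (hT₂le x y h2.1.le h2.2.le).trans le_rfl
  · exact le_rfl
  · calc T₂ (x ⊓ a) (y ⊓ a) ≤ (x ⊓ a) ⊓ (y ⊓ a) := hT₂le _ _ inf_le_right inf_le_right
      _ ≤ x ⊓ y := inf_le_inf inf_le_left inf_le_left
end

section
/- Let L be a bounded lattice and a ∈ L \ {0,1}. Let T₁ be a t-subnorm on [a,1] and T₂ a t-subnorm on [0,a]. If the ordinal sum T : L² → L (defined by T₁ on [a,1)², T₂ on [0,a)², x ∧ y on mixed blocks and when 1 ∈ {x,y}, and T₂(x ∧ a, y ∧ a) otherwise) is a t-norm on L, then the set {x ∈ L : x ∥ a and T₂(x ∧ a, a) < x ∧ a} is empty. -/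
/-- if the ordinal sum of two t-subnorms `T₁` (on `[a,1]`) and `T₂` (on `[0,a]`)
is a t-norm on `L`, then `{x ∈ L : x ∥ a and T₂(x ⊓ a, a) < x ⊓ a} = ∅`. -/
theorem stmt_8 {L : Type*} [Lattice L] [BoundedOrder L] (a : L)
    (ha0 : a ≠ ⊥) (ha1 : a ≠ ⊤) (T₁ T₂ : L → L → L)
    (hT₁mem : ∀ x y, a ≤ x → a ≤ y → a ≤ T₁ x y)
    (hT₁comm : ∀ x y, a ≤ x → a ≤ y → T₁ x y = T₁ y x)
    (hT₁assoc : ∀ x y z, a ≤ x → a ≤ y → a ≤ z → T₁ (T₁ x y) z = T₁ x (T₁ y z))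
    (hT₁mono : ∀ x y z, a ≤ x → a ≤ y → a ≤ z → x ≤ y → T₁ x z ≤ T₁ y z ∧ T₁ z x ≤ T₁ z y)
    (hT₁le : ∀ x y, a ≤ x → a ≤ y → T₁ x y ≤ x ⊓ y)
    (hT₂mem : ∀ x y, x ≤ a → y ≤ a → T₂ x y ≤ a)
    (hT₂comm : ∀ x y, x ≤ a → y ≤ a → T₂ x y = T₂ y x)
    (hT₂assoc : ∀ x y z, x ≤ a → y ≤ a → z ≤ a → T₂ (T₂ x y) z = T₂ x (T₂ y z))
    (hT₂mono : ∀ x y z, x ≤ a → y ≤ a → z ≤ a → x ≤ y → T₂ x z ≤ T₂ y z ∧ T₂ z x ≤ T₂ z y)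
    (hT₂le : ∀ x y, x ≤ a → y ≤ a → T₂ x y ≤ x ⊓ y)
    (hcomm : ∀ x y, ordinalSum a T₁ T₂ x y = ordinalSum a T₁ T₂ y x)
    (hassoc : ∀ x y z, ordinalSum a T₁ T₂ (ordinalSum a T₁ T₂ x y) z
      = ordinalSum a T₁ T₂ x (ordinalSum a T₁ T₂ y z))
    (hmono : ∀ x y z : L, x ≤ y → ordinalSum a T₁ T₂ x z ≤ ordinalSum a T₁ T₂ y z)
    (hone : ∀ x, ordinalSum a T₁ T₂ ⊤ x = x) :
    {x : L | (¬ x ≤ a ∧ ¬ a ≤ x) ∧ T₂ (x ⊓ a) a < x ⊓ a} = ∅ := by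
  rw [Set.eq_empty_iff_forall_notMem]
  rintro x ⟨⟨hxa, hax⟩, hlt⟩
  have hia : x ⊓ a < a := lt_of_le_of_ne inf_le_right (fun h => hax (h ▸ inf_le_left))
  have htop : a < ⊤ := lt_of_le_of_ne le_top ha1
  have hxtop : x ≠ ⊤ := fun h => hax (h ▸ le_top)
  have hA : ordinalSum a T₁ T₂ (x ⊓ a) a = x ⊓ a := by
    rw [ordinalSum, if_neg, if_neg, if_pos]
    · exact inf_eq_left.mpr inf_le_right
    · exact Or.inl ⟨hia, le_refl a, htop⟩
    · rintro ⟨-, h⟩; exact absurd h (lt_irrefl a)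
    · rintro ⟨⟨h, -⟩, -⟩; exact hax (le_trans h inf_le_left)
  have hB : ordinalSum a T₁ T₂ x a = T₂ (x ⊓ a) a := by
    rw [ordinalSum, if_neg, if_neg, if_neg]
    · rw [inf_idem]
    · rintro (⟨h, -⟩ | ⟨-, h⟩ | h | h)
      · exact hxa h.le
      · exact absurd h (lt_irrefl a)
      · exact ha1 h
      · exact hxtop h
    · rintro ⟨h, -⟩; exact hxa h.le
    · rintro ⟨⟨h, -⟩, -⟩; exact hax h
  have := hmono (x ⊓ a) x a inf_le_left
  rw [hA, hB] at this
  exact hlt.not_ge this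
end

section
/- Let L be a bounded lattice, a ∈ L \ {0,1}, T₁ a t-subnorm on [a,1] and T₂ a t-subnorm on [0,a]. If T₂(z ∧ a, a) = z ∧ a for every z ∈ L incomparable with a (or if no element is incomparable with a), then the ordinal sum T : L² → L defined by T(x,y) = T₁(x,y) for x,y ∈ [a,1); T₂(x,y) for x,y ∈ [0,a); x ∧ y for (x,y) ∈ ([0,a)×[a,1)) ∪ ([a,1)×[0,a)) ∪ (L×{1}) ∪ ({1}×L); and T₂(x ∧ a, y ∧ a) otherwise, is a t-norm on L. -/
open Classical in
/-- Projection used in the proof: comparable elements are fixed, incomparable ones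
are sent to their meet with `a`. -/
noncomputable def ordinalSumProj {L : Type*} [Lattice L] (a z : L) : L :=
  if a ≤ z then z else z ⊓ a

/-- if `T₁` is a t-subnorm on `[a,1]`, `T₂` a t-subnorm on `[0,a]`, and
`T₂(z ⊓ a, a) = z ⊓ a` for every `z` incomparable with `a` (vacuously true when no element
is incomparable with `a`), then the ordinal sum is a t-norm on `L` (commutative, associative,
increasing, with neutral element `1`). -/
theorem stmt_9 {L : Type*} [Lattice L] [BoundedOrder L] (a : L)
    (ha0 : a ≠ ⊥) (ha1 : a ≠ ⊤) (T₁ T₂ : L → L → L)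
    (hT₁mem : ∀ x y, a ≤ x → a ≤ y → a ≤ T₁ x y)
    (hT₁comm : ∀ x y, a ≤ x → a ≤ y → T₁ x y = T₁ y x)
    (hT₁assoc : ∀ x y z, a ≤ x → a ≤ y → a ≤ z → T₁ (T₁ x y) z = T₁ x (T₁ y z))
    (hT₁mono : ∀ x y z, a ≤ x → a ≤ y → a ≤ z → x ≤ y → T₁ x z ≤ T₁ y z ∧ T₁ z x ≤ T₁ z y)
    (hT₁le : ∀ x y, a ≤ x → a ≤ y → T₁ x y ≤ x ⊓ y)
    (hT₂mem : ∀ x y, x ≤ a → y ≤ a → T₂ x y ≤ a)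
    (hT₂comm : ∀ x y, x ≤ a → y ≤ a → T₂ x y = T₂ y x)
    (hT₂assoc : ∀ x y z, x ≤ a → y ≤ a → z ≤ a → T₂ (T₂ x y) z = T₂ x (T₂ y z))
    (hT₂mono : ∀ x y z, x ≤ a → y ≤ a → z ≤ a → x ≤ y → T₂ x z ≤ T₂ y z ∧ T₂ z x ≤ T₂ z y)
    (hT₂le : ∀ x y, x ≤ a → y ≤ a → T₂ x y ≤ x ⊓ y)
    (hIa : ∀ z : L, ¬ z ≤ a → ¬ a ≤ z → T₂ (z ⊓ a) a = z ⊓ a) :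
    (∀ x y, ordinalSum a T₁ T₂ x y = ordinalSum a T₁ T₂ y x) ∧
    (∀ x y z, ordinalSum a T₁ T₂ (ordinalSum a T₁ T₂ x y) z
      = ordinalSum a T₁ T₂ x (ordinalSum a T₁ T₂ y z)) ∧
    (∀ x y z : L, x ≤ y → ordinalSum a T₁ T₂ x z ≤ ordinalSum a T₁ T₂ y z) ∧
    (∀ x, ordinalSum a T₁ T₂ ⊤ x = x) := by
  classical
  -- value lemmas for each branch
  have vAA : ∀ x y : L, a ≤ x → x < ⊤ → a ≤ y → y < ⊤ →
      ordinalSum a T₁ T₂ x y = T₁ x y := by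
    intro x y h1 h2 h3 h4
    simp only [ordinalSum]
    rw [if_pos ⟨⟨h1, h2⟩, ⟨h3, h4⟩⟩]
  have vBB : ∀ x y : L, x < a → y < a → ordinalSum a T₁ T₂ x y = T₂ x y := by
    intro x y h1 h2
    simp only [ordinalSum]
    rw [if_neg (fun h => absurd (h.1.1.trans_lt h1) (lt_irrefl a)), if_pos ⟨h1, h2⟩]
  have vAB : ∀ x y : L, a ≤ x → x < ⊤ → y < a → ordinalSum a T₁ T₂ x y = y := by
    intro x y h1 h2 h3
    simp only [ordinalSum]
    rw [if_neg (fun h => absurd (h.2.1.trans_lt h3) (lt_irrefl a)),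
      if_neg (fun h => absurd (h1.trans_lt h.1) (lt_irrefl a)),
      if_pos (Or.inr (Or.inl ⟨⟨h1, h2⟩, h3⟩)), inf_eq_right.mpr (h3.le.trans h1)]
  have vBA : ∀ x y : L, x < a → a ≤ y → y < ⊤ → ordinalSum a T₁ T₂ x y = x := by
    intro x y h1 h2 h3
    simp only [ordinalSum]
    rw [if_neg (fun h => absurd (h.1.1.trans_lt h1) (lt_irrefl a)),
      if_neg (fun h => absurd (h2.trans_lt h.2) (lt_irrefl a)),
      if_pos (Or.inl ⟨h1, h2, h3⟩), inf_eq_left.mpr (h1.le.trans h2)]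
  have vTopL : ∀ x : L, ordinalSum a T₁ T₂ ⊤ x = x := by
    intro x
    simp only [ordinalSum]
    rw [if_neg (fun h => absurd h.1.2 (lt_irrefl ⊤)),
      if_neg (fun h => absurd h.1 not_top_lt),
      if_pos (Or.inr (Or.inr (Or.inr trivial))), top_inf_eq]
  have vTopR : ∀ x : L, ordinalSum a T₁ T₂ x ⊤ = x := by
    intro x
    simp only [ordinalSum]
    rw [if_neg (fun h => absurd h.2.2 (lt_irrefl ⊤)),
      if_neg (fun h => absurd h.2 not_top_lt),
      if_pos (Or.inr (Or.inr (Or.inl trivial))), inf_top_eq]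
  have vD : ∀ x y : L, ¬ x ≤ a → ¬ a ≤ x → y ≠ ⊤ →
      ordinalSum a T₁ T₂ x y = T₂ (x ⊓ a) (y ⊓ a) := by
    intro x y h1 h2 hy
    simp only [ordinalSum]
    rw [if_neg (fun h => h2 h.1.1), if_neg (fun h => h1 h.1.le), if_neg ?_]
    rintro (⟨h, _⟩ | ⟨⟨h, _⟩, _⟩ | h | h)
    · exact h1 h.le
    · exact h2 h
    · exact hy h
    · exact h2 (le_top.trans_eq h.symm)
  have vD' : ∀ x y : L, ¬ y ≤ a → ¬ a ≤ y → x ≠ ⊤ →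
      ordinalSum a T₁ T₂ x y = T₂ (x ⊓ a) (y ⊓ a) := by
    intro x y h1 h2 hx
    simp only [ordinalSum]
    rw [if_neg (fun h => h2 h.2.1), if_neg (fun h => h1 h.2.le), if_neg ?_]
    rintro (⟨_, h, _⟩ | ⟨_, h⟩ | h | h)
    · exact h2 h
    · exact h1 h.le
    · exact h2 (le_top.trans_eq h.symm)
    · exact hx h
  -- the ordinal sum is below the meet
  have hle : ∀ x y : L, ordinalSum a T₁ T₂ x y ≤ x ⊓ y := by
    intro x y
    simp only [ordinalSum]
    split_ifs with h1 h2 h3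
    · exact hT₁le x y h1.1.1 h1.2.1
    · exact hT₂le x y h2.1.le h2.2.le
    · exact le_rfl
    · exact le_inf ((hT₂le _ _ inf_le_right inf_le_right).trans
        (inf_le_left.trans inf_le_left))
        ((hT₂le _ _ inf_le_right inf_le_right).trans (inf_le_right.trans inf_le_left))
  have hSneT : ∀ x y : L, x ≠ ⊤ → ordinalSum a T₁ T₂ x y ≠ ⊤ := by
    intro x y hx h
    exact hx (top_le_iff.mp (h ▸ ((hle x y).trans inf_le_left)))
  -- the result is comparable with a when no argument is ⊤
  have hScomp : ∀ x y : L, x ≠ ⊤ → y ≠ ⊤ →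
      a ≤ ordinalSum a T₁ T₂ x y ∨ ordinalSum a T₁ T₂ x y ≤ a := by
    intro x y hx hy
    simp only [ordinalSum]
    split_ifs with h1 h2 h3
    · exact Or.inl (hT₁mem x y h1.1.1 h1.2.1)
    · exact Or.inr (hT₂mem x y h2.1.le h2.2.le)
    · rcases h3 with ⟨h, _⟩ | ⟨_, h⟩ | h | h
      · exact Or.inr (inf_le_left.trans h.le)
      · exact Or.inr (inf_le_right.trans h.le)
      · exact absurd h hy
      · exact absurd h hx
    · exact Or.inr (hT₂mem _ _ inf_le_right inf_le_right)
  -- projection lemmas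
  have prA : ∀ z : L, a ≤ z → ordinalSumProj a z = z := fun z h => if_pos h
  have prB : ∀ z : L, z ≤ a → ordinalSumProj a z = z := by
    intro z h
    by_cases h2 : a ≤ z
    · exact if_pos h2
    · exact (if_neg h2).trans (inf_eq_left.mpr h)
  have prD : ∀ z : L, ¬ a ≤ z → ordinalSumProj a z = z ⊓ a := fun z h => if_neg h
  have prfix : ∀ z : L, a ≤ z ∨ z ≤ a → ordinalSumProj a z = z :=
    fun z h => h.elim (prA z) (prB z)
  have prle : ∀ z : L, ordinalSumProj a z ≤ z := by
    intro z
    by_cases h : a ≤ z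
    · exact (prA z h).le
    · rw [prD z h]; exact inf_le_left
  have prneT : ∀ z : L, z ≠ ⊤ → ordinalSumProj a z ≠ ⊤ :=
    fun z hz h => hz (top_le_iff.mp (h ▸ prle z))
  have prclass : ∀ z : L, z ≠ ⊤ →
      (a ≤ ordinalSumProj a z ∧ ordinalSumProj a z < ⊤) ∨ ordinalSumProj a z < a := by
    intro z hz
    by_cases h : a ≤ z
    · rw [prA z h]; exact Or.inl ⟨h, lt_top_iff_ne_top.mpr hz⟩
    · right; rw [prD z h]
      exact lt_of_le_of_ne inf_le_right (fun he => h (he ▸ inf_le_left))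
  have prmono : ∀ u v : L, u ≤ v → ordinalSumProj a u ≤ ordinalSumProj a v := by
    intro u v h
    by_cases h1 : a ≤ u
    · rw [prA u h1, prA v (h1.trans h)]; exact h
    · by_cases h2 : a ≤ v
      · rw [prD u h1, prA v h2]; exact inf_le_right.trans h2
      · rw [prD u h1, prD v h2]; exact inf_le_inf_right a h
  -- reduction: the operation only depends on the projections (away from ⊤)
  have red : ∀ x y : L, x ≠ ⊤ → y ≠ ⊤ →
      ordinalSum a T₁ T₂ x y = ordinalSum a T₁ T₂ (ordinalSumProj a x) (ordinalSumProj a y) := by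
    intro x y hx hy
    have hxT : x < ⊤ := lt_top_iff_ne_top.mpr hx
    have hyT : y < ⊤ := lt_top_iff_ne_top.mpr hy
    by_cases hx1 : a ≤ x
    · rw [prA x hx1]
      by_cases hy1 : a ≤ y
      · rw [prA y hy1]
      · by_cases hy2 : y ≤ a
        · rw [prB y hy2]
        · -- y incomparable
          have hya : y ⊓ a < a :=
            lt_of_le_of_ne inf_le_right (fun he => hy1 (he ▸ inf_le_left))
          rw [prD y hy1, vD' x y hy2 hy1 hx, inf_eq_right.mpr hx1,
            hT₂comm a (y ⊓ a) le_rfl inf_le_right, hIa y hy2 hy1,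
            vAB x (y ⊓ a) hx1 hxT hya]
    · by_cases hx2 : x ≤ a
      · have hxa : x < a := lt_of_le_of_ne hx2 (fun h => hx1 h.ge)
        rw [prB x hx2]
        by_cases hy1 : a ≤ y
        · rw [prA y hy1]
        · by_cases hy2 : y ≤ a
          · rw [prB y hy2]
          · have hya : y ⊓ a < a :=
              lt_of_le_of_ne inf_le_right (fun he => hy1 (he ▸ inf_le_left))
            rw [prD y hy1, vD' x y hy2 hy1 hx, inf_eq_left.mpr hx2,
              vBB x (y ⊓ a) hxa hya]
      · -- x incomparable
        have hxa : x ⊓ a < a :=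
          lt_of_le_of_ne inf_le_right (fun he => hx1 (he ▸ inf_le_left))
        rw [prD x hx1]
        by_cases hy1 : a ≤ y
        · rw [prA y hy1, vD x y hx2 hx1 hy, inf_eq_right.mpr hy1, hIa x hx2 hx1,
            vBA (x ⊓ a) y hxa hy1 hyT]
        · by_cases hy2 : y ≤ a
          · have hya : y < a := lt_of_le_of_ne hy2 (fun h => hy1 h.ge)
            rw [prB y hy2, vD x y hx2 hx1 hy, inf_eq_left.mpr hy2,
              vBB (x ⊓ a) y hxa hya]
          · have hya : y ⊓ a < a :=
              lt_of_le_of_ne inf_le_right (fun he => hy1 (he ▸ inf_le_left))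
            rw [prD y hy1, vD x y hx2 hx1 hy, vBB (x ⊓ a) (y ⊓ a) hxa hya]
  -- associativity on comparable elements
  have key : ∀ u v w : L, ((a ≤ u ∧ u < ⊤) ∨ u < a) → ((a ≤ v ∧ v < ⊤) ∨ v < a) →
      ((a ≤ w ∧ w < ⊤) ∨ w < a) →
      ordinalSum a T₁ T₂ (ordinalSum a T₁ T₂ u v) w
        = ordinalSum a T₁ T₂ u (ordinalSum a T₁ T₂ v w) := by
    rintro u v w (⟨hu1, hu2⟩ | hu) (⟨hv1, hv2⟩ | hv) (⟨hw1, hw2⟩ | hw)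
    · have h1 : a ≤ T₁ u v := hT₁mem u v hu1 hv1
      have h2 : T₁ u v < ⊤ := ((hT₁le u v hu1 hv1).trans inf_le_left).trans_lt hu2
      have h3 : a ≤ T₁ v w := hT₁mem v w hv1 hw1
      have h4 : T₁ v w < ⊤ := ((hT₁le v w hv1 hw1).trans inf_le_left).trans_lt hv2
      rw [vAA u v hu1 hu2 hv1 hv2, vAA _ w h1 h2 hw1 hw2, vAA v w hv1 hv2 hw1 hw2,
        vAA u _ hu1 hu2 h3 h4]
      exact hT₁assoc u v w hu1 hv1 hw1
    · have h1 : a ≤ T₁ u v := hT₁mem u v hu1 hv1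
      have h2 : T₁ u v < ⊤ := ((hT₁le u v hu1 hv1).trans inf_le_left).trans_lt hu2
      rw [vAA u v hu1 hu2 hv1 hv2, vAB _ w h1 h2 hw, vAB v w hv1 hv2 hw,
        vAB u w hu1 hu2 hw]
    · rw [vAB u v hu1 hu2 hv, vBA v w hv hw1 hw2, vAB u v hu1 hu2 hv]
    · have hvw : T₂ v w < a := ((hT₂le v w hv.le hw.le).trans inf_le_left).trans_lt hv
      rw [vAB u v hu1 hu2 hv, vBB v w hv hw, vAB u _ hu1 hu2 hvw]
    · have h3 : a ≤ T₁ v w := hT₁mem v w hv1 hw1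
      have h4 : T₁ v w < ⊤ := ((hT₁le v w hv1 hw1).trans inf_le_left).trans_lt hv2
      rw [vBA u v hu hv1 hv2, vBA u w hu hw1 hw2, vAA v w hv1 hv2 hw1 hw2,
        vBA u _ hu h3 h4]
    · rw [vBA u v hu hv1 hv2, vAB v w hv1 hv2 hw, vBB u w hu hw]
    · have huv : T₂ u v < a := ((hT₂le u v hu.le hv.le).trans inf_le_left).trans_lt hu
      rw [vBB u v hu hv, vBA v w hv hw1 hw2, vBB u v hu hv,
        vBA (T₂ u v) w huv hw1 hw2]
    · have huv : T₂ u v < a := ((hT₂le u v hu.le hv.le).trans inf_le_left).trans_lt hu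
      have hvw : T₂ v w < a := ((hT₂le v w hv.le hw.le).trans inf_le_left).trans_lt hv
      rw [vBB u v hu hv, vBB _ w huv hw, vBB v w hv hw, vBB u _ hu hvw]
      exact hT₂assoc u v w hu.le hv.le hw.le
  -- monotonicity on comparable elements
  have mkey : ∀ u v w : L, ((a ≤ u ∧ u < ⊤) ∨ u < a) → ((a ≤ v ∧ v < ⊤) ∨ v < a) →
      ((a ≤ w ∧ w < ⊤) ∨ w < a) → u ≤ v →
      ordinalSum a T₁ T₂ u w ≤ ordinalSum a T₁ T₂ v w := by
    rintro u v w (⟨hu1, hu2⟩ | hu) (⟨hv1, hv2⟩ | hv) (⟨hw1, hw2⟩ | hw) huv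
    · rw [vAA u w hu1 hu2 hw1 hw2, vAA v w hv1 hv2 hw1 hw2]
      exact (hT₁mono u v w hu1 hv1 hw1 huv).1
    · rw [vAB u w hu1 hu2 hw, vAB v w hv1 hv2 hw]
    · exact absurd (hu1.trans huv) hv.not_ge
    · exact absurd (hu1.trans huv) hv.not_ge
    · rw [vBA u w hu hw1 hw2, vAA v w hv1 hv2 hw1 hw2]
      exact hu.le.trans (hT₁mem v w hv1 hw1)
    · rw [vBB u w hu hw, vAB v w hv1 hv2 hw]
      exact (hT₂le u w hu.le hw.le).trans inf_le_right
    · rw [vBA u w hu hw1 hw2, vBA v w hv hw1 hw2]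
      exact huv
    · rw [vBB u w hu hw, vBB v w hv hw]
      exact (hT₂mono u v w hu.le hv.le hw.le huv).1
  refine ⟨?_, ?_, ?_, vTopL⟩
  · -- commutativity
    intro x y
    by_cases hx : x = ⊤
    · subst hx; rw [vTopL, vTopR]
    by_cases hy : y = ⊤
    · subst hy; rw [vTopL, vTopR]
    rw [red x y hx hy, red y x hy hx]
    rcases prclass x hx with ⟨h1, h2⟩ | h1 <;> rcases prclass y hy with ⟨h3, h4⟩ | h3
    · rw [vAA _ _ h1 h2 h3 h4, vAA _ _ h3 h4 h1 h2]; exact hT₁comm _ _ h1 h3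
    · rw [vAB _ _ h1 h2 h3, vBA _ _ h3 h1 h2]
    · rw [vBA _ _ h1 h3 h4, vAB _ _ h3 h4 h1]
    · rw [vBB _ _ h1 h3, vBB _ _ h3 h1]; exact hT₂comm _ _ h1.le h3.le
  · -- associativity
    intro x y z
    by_cases hx : x = ⊤
    · subst hx; rw [vTopL, vTopL]
    by_cases hy : y = ⊤
    · subst hy; rw [vTopR, vTopL]
    by_cases hz : z = ⊤
    · subst hz; rw [vTopR, vTopR]
    have e1 : ordinalSum a T₁ T₂ (ordinalSum a T₁ T₂ x y) z
        = ordinalSum a T₁ T₂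
            (ordinalSum a T₁ T₂ (ordinalSumProj a x) (ordinalSumProj a y))
            (ordinalSumProj a z) := by
      rw [red x y hx hy,
        red _ z (hSneT _ _ (prneT x hx)) hz,
        prfix _ (hScomp _ _ (prneT x hx) (prneT y hy))]
    have e2 : ordinalSum a T₁ T₂ x (ordinalSum a T₁ T₂ y z)
        = ordinalSum a T₁ T₂ (ordinalSumProj a x)
            (ordinalSum a T₁ T₂ (ordinalSumProj a y) (ordinalSumProj a z)) := by
      rw [red y z hy hz,
        red x _ hx (hSneT _ _ (prneT y hy)),
        prfix _ (hScomp _ _ (prneT y hy) (prneT z hz))]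
    rw [e1, e2]
    exact key _ _ _ (prclass x hx) (prclass y hy) (prclass z hz)
  · -- monotonicity
    intro x y z hxy
    by_cases hz : z = ⊤
    · subst hz; rw [vTopR, vTopR]; exact hxy
    by_cases hy : y = ⊤
    · subst hy; rw [vTopL]; exact (hle x z).trans inf_le_right
    have hx : x ≠ ⊤ := fun h => hy (top_le_iff.mp (h ▸ hxy))
    rw [red x z hx hz, red y z hy hz]
    exact mkey _ _ _ (prclass x hx) (prclass y hy) (prclass z hz) (prmono x y hxy)
end

section
/- Let L be a bounded lattice, a ∈ L \ {0,1}, and T₁ a t-norm on [a,1]. Then the binary operation T⁽¹⁾ : L² → L defined by T⁽¹⁾(x,y) = x ∧ y if x = 1 or y = 1; T⁽¹⁾(x,y) = T₁(x,y) if x, y ∈ [a,1); and T⁽¹⁾(x,y) = x ∧ y ∧ a otherwise, is a t-norm on L. -/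
open Classical in
/-- The operation `T⁽¹⁾` of Corollary 5.1: `x ⊓ y` if `x = 1` or `y = 1`, `T₁(x,y)` if
`x, y ∈ [a,1)`, and `x ⊓ y ⊓ a` otherwise. -/
noncomputable def Tone {L : Type*} [Lattice L] [BoundedOrder L]
    (a : L) (T₁ : L → L → L) (x y : L) : L :=
  if x = ⊤ ∨ y = ⊤ then x ⊓ y
  else if (a ≤ x ∧ x < ⊤) ∧ (a ≤ y ∧ y < ⊤) then T₁ x y
  else x ⊓ y ⊓ a

section Aux
variable {L : Type*} [Lattice L] [BoundedOrder L] (a : L) (T₁ : L → L → L)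

lemma Tone_top_left (x : L) : Tone a T₁ ⊤ x = x := by simp [Tone]

lemma Tone_top_right (x : L) : Tone a T₁ x ⊤ = x := by simp [Tone]

lemma Tone_mid {x y : L} (hax : a ≤ x) (hx : x ≠ ⊤) (hay : a ≤ y) (hy : y ≠ ⊤) :
    Tone a T₁ x y = T₁ x y := by
  unfold Tone
  rw [if_neg (not_or.mpr ⟨hx, hy⟩), if_pos ⟨⟨hax, hx.lt_top⟩, ⟨hay, hy.lt_top⟩⟩]

lemma Tone_oth {x y : L} (hx : x ≠ ⊤) (hy : y ≠ ⊤) (h : ¬(a ≤ x ∧ a ≤ y)) :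
    Tone a T₁ x y = x ⊓ y ⊓ a := by
  unfold Tone
  rw [if_neg (not_or.mpr ⟨hx, hy⟩), if_neg (fun hc => h ⟨hc.1.1, hc.2.1⟩)]

end Aux

/-- if `T₁` is a t-norm on `[a,1]` for `a ∈ L \ {0,1}`, then `T⁽¹⁾` is a
t-norm on `L` (commutative, associative, increasing, with neutral element `1`). -/
theorem stmt_11 {L : Type*} [Lattice L] [BoundedOrder L] (a : L)
    (ha0 : a ≠ ⊥) (ha1 : a ≠ ⊤) (T₁ : L → L → L)
    (hT₁mem : ∀ x y, a ≤ x → a ≤ y → a ≤ T₁ x y)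
    (hT₁comm : ∀ x y, a ≤ x → a ≤ y → T₁ x y = T₁ y x)
    (hT₁assoc : ∀ x y z, a ≤ x → a ≤ y → a ≤ z → T₁ (T₁ x y) z = T₁ x (T₁ y z))
    (hT₁mono : ∀ x y z, a ≤ x → a ≤ y → a ≤ z → x ≤ y → T₁ x z ≤ T₁ y z ∧ T₁ z x ≤ T₁ z y)
    (hT₁one : ∀ x, a ≤ x → T₁ ⊤ x = x) :
    (∀ x y, Tone a T₁ x y = Tone a T₁ y x) ∧
    (∀ x y z, Tone a T₁ (Tone a T₁ x y) z = Tone a T₁ x (Tone a T₁ y z)) ∧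
    (∀ x y z : L, x ≤ y → Tone a T₁ x z ≤ Tone a T₁ y z) ∧
    (∀ x, Tone a T₁ ⊤ x = x) := by
  -- T₁ is bounded above by the inf
  have hle : ∀ x y, a ≤ x → a ≤ y → T₁ x y ≤ x ⊓ y := by
    intro x y hx hy
    refine le_inf ?_ ((hT₁mono x ⊤ y hx le_top hy le_top).1.trans (hT₁one y hy).le)
    calc T₁ x y ≤ T₁ x ⊤ := (hT₁mono y ⊤ x hy le_top hx le_top).2
    _ = x := by rw [hT₁comm x ⊤ hx le_top, hT₁one x hx]
  have hTone_le : ∀ x y : L, Tone a T₁ x y ≤ x ⊓ y := by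
    intro x y
    unfold Tone
    split_ifs with h1 h2
    · exact le_rfl
    · exact hle x y h2.1.1 h2.2.1
    · exact inf_le_left
  have habs : ∀ x y : L, x ≠ ⊤ → y ≠ ⊤ → Tone a T₁ x y ⊓ a = x ⊓ y ⊓ a := by
    intro x y hx hy
    by_cases h : a ≤ x ∧ a ≤ y
    · rw [Tone_mid a T₁ h.1 hx h.2 hy]
      have ha := hT₁mem x y h.1 h.2
      exact le_antisymm (inf_le_inf_right a (hle x y h.1 h.2))
        (le_inf (le_trans inf_le_right ha) inf_le_right)
    · rw [Tone_oth a T₁ hx hy h, inf_assoc, inf_idem]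
  refine ⟨?_, ?_, ?_, fun x => Tone_top_left a T₁ x⟩
  · -- commutativity
    intro x y
    by_cases hx : x = ⊤
    · subst hx; rw [Tone_top_left, Tone_top_right]
    by_cases hy : y = ⊤
    · subst hy; rw [Tone_top_left, Tone_top_right]
    by_cases hax : a ≤ x <;> by_cases hay : a ≤ y
    · rw [Tone_mid a T₁ hax hx hay hy, Tone_mid a T₁ hay hy hax hx, hT₁comm x y hax hay]
    all_goals rw [Tone_oth a T₁ hx hy (by tauto), Tone_oth a T₁ hy hx (by tauto),
      inf_comm x y]
  · -- associativity
    intro x y z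
    by_cases hx : x = ⊤
    · subst hx; rw [Tone_top_left, Tone_top_left]
    by_cases hy : y = ⊤
    · subst hy; rw [Tone_top_right, Tone_top_left]
    by_cases hz : z = ⊤
    · subst hz; rw [Tone_top_right, Tone_top_right]
    have hxyT : Tone a T₁ x y ≠ ⊤ := fun h =>
      hx (top_le_iff.mp (h ▸ ((hTone_le x y).trans inf_le_left)))
    have hyzT : Tone a T₁ y z ≠ ⊤ := fun h =>
      hy (top_le_iff.mp (h ▸ ((hTone_le y z).trans inf_le_left)))
    by_cases haxyz : a ≤ x ∧ a ≤ y ∧ a ≤ z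
    · obtain ⟨hax, hay, haz⟩ := haxyz
      have h1 : Tone a T₁ x y = T₁ x y := Tone_mid a T₁ hax hx hay hy
      have h2 : Tone a T₁ y z = T₁ y z := Tone_mid a T₁ hay hy haz hz
      rw [h1, h2, Tone_mid a T₁ (hT₁mem x y hax hay) (h1 ▸ hxyT) haz hz,
        Tone_mid a T₁ hax hx (hT₁mem y z hay haz) (h2 ▸ hyzT)]
      exact hT₁assoc x y z hax hay haz
    · have h1 : ¬(a ≤ Tone a T₁ x y ∧ a ≤ z) := by
        rintro ⟨h1, h2⟩
        have := le_inf_iff.mp (h1.trans (hTone_le x y))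
        exact haxyz ⟨this.1, this.2, h2⟩
      have h2 : ¬(a ≤ x ∧ a ≤ Tone a T₁ y z) := by
        rintro ⟨hx', h'⟩
        have := le_inf_iff.mp (h'.trans (hTone_le y z))
        exact haxyz ⟨hx', this.1, this.2⟩
      rw [Tone_oth a T₁ hxyT hz h1, Tone_oth a T₁ hx hyzT h2, inf_right_comm,
        habs x y hx hy, inf_assoc x (Tone a T₁ y z) a, habs y z hy hz]
      ac_rfl
  · -- monotonicity
    intro x y z hxy
    by_cases hy : y = ⊤
    · subst hy
      rw [Tone_top_left]
      exact (hTone_le x z).trans inf_le_right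
    by_cases hz : z = ⊤
    · subst hz; rw [Tone_top_right, Tone_top_right]; exact hxy
    have hx : x ≠ ⊤ := fun h => hy (top_le_iff.mp (h ▸ hxy))
    by_cases hay : a ≤ y <;> by_cases haz : a ≤ z
    · rw [Tone_mid a T₁ hay hy haz hz]
      by_cases hax : a ≤ x
      · rw [Tone_mid a T₁ hax hx haz hz]
        exact (hT₁mono x y z hax hay haz hxy).1
      · rw [Tone_oth a T₁ hx hz (fun h => hax h.1)]
        exact inf_le_right.trans (hT₁mem y z hay haz)
    all_goals {
      have hnx : ¬(a ≤ x ∧ a ≤ z) := by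
        rintro ⟨h1, h2⟩
        exact (by tauto : ¬(a ≤ y ∧ a ≤ z)) ⟨h1.trans hxy, h2⟩
      rw [Tone_oth a T₁ hx hz hnx, Tone_oth a T₁ hy hz (by tauto)]
      exact inf_le_inf_right a (inf_le_inf_right z hxy)
    }
end

section
/- Let L be a bounded lattice, a ∈ L \ {0,1}, and T₁ a t-norm on [a,1]. Let I_a be the set of elements incomparable with a. Then the binary operation T⁽²⁾ : L² → L defined by T⁽²⁾(x,y) = x ∧ y if x = 1 or y = 1; T⁽²⁾(x,y) = 0 if (x,y) ∈ [0,a)² ∪ ([0,a) × I_a) ∪ (I_a × [0,a)) ∪ (I_a × I_a); T⁽²⁾(x,y) = T₁(x,y) if x, y ∈ [a,1); and T⁽²⁾(x,y) = x ∧ y ∧ a otherwise, is a t-norm on L. -/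
/-!
Split `L \ {1}` into `A = [a,1)` and its complement `B = {x | ¬ a ≤ x} = [0,a) ∪ I_a`.
Off the top element, `T⁽²⁾` is `T₁` on `A × A`, `0` on `B × B`, and on mixed pairs it sends the
`B`-argument `x` to `x ⊓ a`, which again lies in `B`. Since `B` is closed under `⊓ a` and contains
`0`, every triple of arguments reduces by these rules to the t-norm axioms of `T₁` on `A` or to
lattice identities.
-/

open Classical in
/-- The operation `T⁽²⁾` of Corollary 5.2: `x ⊓ y` if `x = 1` or `y = 1`; `0` if both `x`
and `y` lie in `[0,a) ∪ I_a` (where `I_a` is the set of elements incomparable with `a`);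
`T₁(x,y)` if `x, y ∈ [a,1)`; and `x ⊓ y ⊓ a` otherwise. -/
noncomputable def Ttwo {L : Type*} [Lattice L] [BoundedOrder L]
    (a : L) (T₁ : L → L → L) (x y : L) : L :=
  if x = ⊤ ∨ y = ⊤ then x ⊓ y
  else if (x < a ∨ (¬ x ≤ a ∧ ¬ a ≤ x)) ∧ (y < a ∨ (¬ y ≤ a ∧ ¬ a ≤ y)) then ⊥
  else if (a ≤ x ∧ x < ⊤) ∧ (a ≤ y ∧ y < ⊤) then T₁ x y
  else x ⊓ y ⊓ a

lemma ne_top_of_not_le {α : Type*} [Preorder α] [OrderTop α] {a x : α} (h : ¬ a ≤ x) : x ≠ ⊤ := by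
  rintro rfl
  exact h le_top

section Ttwo

variable {L : Type*} [Lattice L] [BoundedOrder L] {a : L} {T₁ : L → L → L} {x y z : L}

@[simp]
lemma Ttwo_top_left (y : L) : Ttwo a T₁ ⊤ y = y := by
  simp [Ttwo]

@[simp]
lemma Ttwo_top_right (x : L) : Ttwo a T₁ x ⊤ = x := by
  simp [Ttwo]

lemma Ttwo_of_not_le_of_not_le (hx : ¬ a ≤ x) (hy : ¬ a ≤ y) : Ttwo a T₁ x y = ⊥ := by
  rw [Ttwo, if_neg (not_or.2 ⟨ne_top_of_not_le hx, ne_top_of_not_le hy⟩),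
    if_pos ⟨not_le_iff_lt_or_incompRel.1 hx, not_le_iff_lt_or_incompRel.1 hy⟩]

lemma Ttwo_of_le_of_le (hx : a ≤ x) (hy : a ≤ y) (hx' : x ≠ ⊤) (hy' : y ≠ ⊤) :
    Ttwo a T₁ x y = T₁ x y := by
  rw [Ttwo, if_neg (not_or.2 ⟨hx', hy'⟩),
    if_neg fun h => not_le_iff_lt_or_incompRel.2 h.1 hx,
    if_pos ⟨⟨hx, hx'.lt_top⟩, ⟨hy, hy'.lt_top⟩⟩]

lemma Ttwo_of_le_of_not_le (hx : a ≤ x) (hx' : x ≠ ⊤) (hy : ¬ a ≤ y) :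
    Ttwo a T₁ x y = y ⊓ a := by
  rw [Ttwo, if_neg (not_or.2 ⟨hx', ne_top_of_not_le hy⟩),
    if_neg fun h => not_le_iff_lt_or_incompRel.2 h.1 hx,
    if_neg fun h => hy h.2.1, inf_assoc, inf_eq_right.2 (inf_le_right.trans hx)]

lemma Ttwo_of_not_le_of_le (hx : ¬ a ≤ x) (hy : a ≤ y) (hy' : y ≠ ⊤) :
    Ttwo a T₁ x y = x ⊓ a := by
  rw [Ttwo, if_neg (not_or.2 ⟨ne_top_of_not_le hx, hy'⟩),
    if_neg fun h => not_le_iff_lt_or_incompRel.2 h.2 hy,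
    if_neg fun h => hx h.1.1, inf_right_comm, inf_eq_left.2 (inf_le_right.trans hy)]

lemma le_right_of_mono_of_top_left
    (hT₁mono : ∀ x y z, a ≤ x → a ≤ y → a ≤ z → x ≤ y → T₁ x z ≤ T₁ y z ∧ T₁ z x ≤ T₁ z y)
    (hT₁one : ∀ x, a ≤ x → T₁ ⊤ x = x) (hx : a ≤ x) (hy : a ≤ y) : T₁ x y ≤ y :=
  (hT₁mono x ⊤ y hx le_top hy le_top).1.trans_eq (hT₁one y hy)

lemma Ttwo_comm (hT₁comm : ∀ x y, a ≤ x → a ≤ y → T₁ x y = T₁ y x) (x y : L) :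
    Ttwo a T₁ x y = Ttwo a T₁ y x := by
  rcases eq_or_ne x ⊤ with rfl | hx'
  · simp
  rcases eq_or_ne y ⊤ with rfl | hy'
  · simp
  by_cases hx : a ≤ x <;> by_cases hy : a ≤ y
  · rw [Ttwo_of_le_of_le hx hy hx' hy', Ttwo_of_le_of_le hy hx hy' hx', hT₁comm x y hx hy]
  · rw [Ttwo_of_le_of_not_le hx hx' hy, Ttwo_of_not_le_of_le hy hx hx']
  · rw [Ttwo_of_not_le_of_le hx hy hy', Ttwo_of_le_of_not_le hy hy' hx]
  · rw [Ttwo_of_not_le_of_not_le hx hy, Ttwo_of_not_le_of_not_le hy hx]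

lemma Ttwo_assoc (hT₁mem : ∀ x y, a ≤ x → a ≤ y → a ≤ T₁ x y)
    (hT₁assoc : ∀ x y z, a ≤ x → a ≤ y → a ≤ z → T₁ (T₁ x y) z = T₁ x (T₁ y z))
    (hT₁mono : ∀ x y z, a ≤ x → a ≤ y → a ≤ z → x ≤ y → T₁ x z ≤ T₁ y z ∧ T₁ z x ≤ T₁ z y)
    (hT₁one : ∀ x, a ≤ x → T₁ ⊤ x = x) (x y z : L) :
    Ttwo a T₁ (Ttwo a T₁ x y) z = Ttwo a T₁ x (Ttwo a T₁ y z) := by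
  rcases eq_or_ne x ⊤ with rfl | hx'
  · simp
  rcases eq_or_ne z ⊤ with rfl | hz'
  · simp
  rcases eq_or_ne y ⊤ with rfl | hy'
  · simp
  have hT₁ne_top : ∀ {u v}, a ≤ u → a ≤ v → v ≠ ⊤ → T₁ u v ≠ ⊤ := fun hu hv hv' h =>
    hv' (top_le_iff.1 (h ▸ le_right_of_mono_of_top_left hT₁mono hT₁one hu hv))
  have hinf : ∀ {u}, ¬ a ≤ u → ¬ a ≤ u ⊓ a := fun hu h => hu (h.trans inf_le_left)
  have hbot : ∀ {u}, ¬ a ≤ u → ¬ a ≤ (⊥ : L) := fun hu h => hu (h.trans bot_le)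
  by_cases hx : a ≤ x <;> by_cases hy : a ≤ y <;> by_cases hz : a ≤ z
  · rw [Ttwo_of_le_of_le hx hy hx' hy',
      Ttwo_of_le_of_le (hT₁mem x y hx hy) hz (hT₁ne_top hx hy hy') hz',
      Ttwo_of_le_of_le hy hz hy' hz',
      Ttwo_of_le_of_le hx (hT₁mem y z hy hz) hx' (hT₁ne_top hy hz hz'), hT₁assoc x y z hx hy hz]
  · rw [Ttwo_of_le_of_le hx hy hx' hy',
      Ttwo_of_le_of_not_le (hT₁mem x y hx hy) (hT₁ne_top hx hy hy') hz,
      Ttwo_of_le_of_not_le hy hy' hz, Ttwo_of_le_of_not_le hx hx' (hinf hz), inf_assoc, inf_idem]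
  · rw [Ttwo_of_le_of_not_le hx hx' hy, Ttwo_of_not_le_of_le (hinf hy) hz hz',
      Ttwo_of_not_le_of_le hy hz hz', Ttwo_of_le_of_not_le hx hx' (hinf hy)]
  · rw [Ttwo_of_le_of_not_le hx hx' hy, Ttwo_of_not_le_of_not_le (hinf hy) hz,
      Ttwo_of_not_le_of_not_le hy hz, Ttwo_of_le_of_not_le hx hx' (hbot hy), bot_inf_eq]
  · rw [Ttwo_of_not_le_of_le hx hy hy', Ttwo_of_not_le_of_le (hinf hx) hz hz',
      Ttwo_of_le_of_le hy hz hy' hz', Ttwo_of_not_le_of_le hx (hT₁mem y z hy hz)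
        (hT₁ne_top hy hz hz'), inf_assoc, inf_idem]
  · rw [Ttwo_of_not_le_of_le hx hy hy', Ttwo_of_not_le_of_not_le (hinf hx) hz,
      Ttwo_of_le_of_not_le hy hy' hz, Ttwo_of_not_le_of_not_le hx (hinf hz)]
  · rw [Ttwo_of_not_le_of_not_le hx hy, Ttwo_of_not_le_of_le (hbot hx) hz hz',
      Ttwo_of_not_le_of_le hy hz hz', Ttwo_of_not_le_of_not_le hx (hinf hy), bot_inf_eq]
  · rw [Ttwo_of_not_le_of_not_le hx hy, Ttwo_of_not_le_of_not_le hy hz,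
      Ttwo_of_not_le_of_not_le (hbot hx) hz, Ttwo_of_not_le_of_not_le hx (hbot hx)]

lemma Ttwo_le_right
    (hT₁mono : ∀ x y z, a ≤ x → a ≤ y → a ≤ z → x ≤ y → T₁ x z ≤ T₁ y z ∧ T₁ z x ≤ T₁ z y)
    (hT₁one : ∀ x, a ≤ x → T₁ ⊤ x = x) (x z : L) : Ttwo a T₁ x z ≤ z := by
  rcases eq_or_ne x ⊤ with rfl | hx'
  · simp
  rcases eq_or_ne z ⊤ with rfl | hz'
  · simp
  by_cases hx : a ≤ x <;> by_cases hz : a ≤ z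
  · rw [Ttwo_of_le_of_le hx hz hx' hz']
    exact le_right_of_mono_of_top_left hT₁mono hT₁one hx hz
  · rw [Ttwo_of_le_of_not_le hx hx' hz]
    exact inf_le_left
  · rw [Ttwo_of_not_le_of_le hx hz hz']
    exact inf_le_right.trans hz
  · rw [Ttwo_of_not_le_of_not_le hx hz]
    exact bot_le

lemma Ttwo_mono_left (hT₁mem : ∀ x y, a ≤ x → a ≤ y → a ≤ T₁ x y)
    (hT₁mono : ∀ x y z, a ≤ x → a ≤ y → a ≤ z → x ≤ y → T₁ x z ≤ T₁ y z ∧ T₁ z x ≤ T₁ z y)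
    (hT₁one : ∀ x, a ≤ x → T₁ ⊤ x = x) (hxy : x ≤ y) : Ttwo a T₁ x z ≤ Ttwo a T₁ y z := by
  rcases eq_or_ne y ⊤ with rfl | hy'
  · simpa using Ttwo_le_right hT₁mono hT₁one x z
  have hx' : x ≠ ⊤ := ne_top_of_le_ne_top hy' hxy
  rcases eq_or_ne z ⊤ with rfl | hz'
  · simpa using hxy
  by_cases hx : a ≤ x
  · have hy : a ≤ y := hx.trans hxy
    by_cases hz : a ≤ z
    · rw [Ttwo_of_le_of_le hx hz hx' hz', Ttwo_of_le_of_le hy hz hy' hz']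
      exact (hT₁mono x y z hx hy hz hxy).1
    · rw [Ttwo_of_le_of_not_le hx hx' hz, Ttwo_of_le_of_not_le hy hy' hz]
  by_cases hz : a ≤ z
  · rw [Ttwo_of_not_le_of_le hx hz hz']
    by_cases hy : a ≤ y
    · rw [Ttwo_of_le_of_le hy hz hy' hz']
      exact inf_le_right.trans (hT₁mem y z hy hz)
    · rw [Ttwo_of_not_le_of_le hy hz hz']
      exact inf_le_inf_right a hxy
  · rw [Ttwo_of_not_le_of_not_le hx hz]
    exact bot_le

end Ttwo

theorem stmt_12_general {L : Type*} [Lattice L] [BoundedOrder L] (a : L)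
    (T₁ : L → L → L)
    (hT₁mem : ∀ x y, a ≤ x → a ≤ y → a ≤ T₁ x y)
    (hT₁comm : ∀ x y, a ≤ x → a ≤ y → T₁ x y = T₁ y x)
    (hT₁assoc : ∀ x y z, a ≤ x → a ≤ y → a ≤ z → T₁ (T₁ x y) z = T₁ x (T₁ y z))
    (hT₁mono : ∀ x y z, a ≤ x → a ≤ y → a ≤ z → x ≤ y → T₁ x z ≤ T₁ y z ∧ T₁ z x ≤ T₁ z y)
    (hT₁one : ∀ x, a ≤ x → T₁ ⊤ x = x) :
    (∀ x y, Ttwo a T₁ x y = Ttwo a T₁ y x) ∧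
    (∀ x y z, Ttwo a T₁ (Ttwo a T₁ x y) z = Ttwo a T₁ x (Ttwo a T₁ y z)) ∧
    (∀ x y z : L, x ≤ y → Ttwo a T₁ x z ≤ Ttwo a T₁ y z) ∧
    (∀ x, Ttwo a T₁ ⊤ x = x) :=
  ⟨Ttwo_comm hT₁comm, Ttwo_assoc hT₁mem hT₁assoc hT₁mono hT₁one,
    fun _ _ _ => Ttwo_mono_left hT₁mem hT₁mono hT₁one, Ttwo_top_left⟩

/-- if `T₁` is a t-norm on `[a,1]` for `a ∈ L \ {0,1}`, then `T⁽²⁾` is a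
t-norm on `L` (commutative, associative, increasing, with neutral element `1`). -/
theorem stmt_12 {L : Type*} [Lattice L] [BoundedOrder L] (a : L)
    (ha0 : a ≠ ⊥) (ha1 : a ≠ ⊤) (T₁ : L → L → L)
    (hT₁mem : ∀ x y, a ≤ x → a ≤ y → a ≤ T₁ x y)
    (hT₁comm : ∀ x y, a ≤ x → a ≤ y → T₁ x y = T₁ y x)
    (hT₁assoc : ∀ x y z, a ≤ x → a ≤ y → a ≤ z → T₁ (T₁ x y) z = T₁ x (T₁ y z))
    (hT₁mono : ∀ x y z, a ≤ x → a ≤ y → a ≤ z → x ≤ y → T₁ x z ≤ T₁ y z ∧ T₁ z x ≤ T₁ z y)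
    (hT₁one : ∀ x, a ≤ x → T₁ ⊤ x = x) :
    (∀ x y, Ttwo a T₁ x y = Ttwo a T₁ y x) ∧
    (∀ x y z, Ttwo a T₁ (Ttwo a T₁ x y) z = Ttwo a T₁ x (Ttwo a T₁ y z)) ∧
    (∀ x y z : L, x ≤ y → Ttwo a T₁ x z ≤ Ttwo a T₁ y z) ∧
    (∀ x, Ttwo a T₁ ⊤ x = x) :=
  stmt_12_general a T₁ hT₁mem hT₁comm hT₁assoc hT₁mono hT₁one
end

section
/- Let L₁ be the five-element bounded lattice {0, b, a, c, 1} with 0 < b < a < 1, 0 < b < c < 1, and a ∥ c. Define T : L₁² → L₁ by the table: T(x,0) = T(0,x) = 0 for all x; T(x,1) = T(1,x) = x for all x; T(b,b) = 0, T(b,a) = T(a,b) = b, T(b,c) = T(c,b) = 0, T(a,a) = a, T(a,c) = T(c,a) = 0, T(c,c) = 0. Then T is not increasing: b ≤ c but T(b,a) = b > 0 = T(c,a). In particular T is not a t-norm on L₁. -/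
/-- on the five-element bounded lattice `L₁ = {0, b, a, c, 1}` with
`0 < b < a < 1`, `b < c < 1` and `a ∥ c`, the operation `T` given by the table of
Example 5.1 (the ordinal sum of the t-subnorms `T₁ ≡ a` on `[a,1]` and `T₂ ≡ 0` on `[0,a]`)
is not increasing — `b ≤ c` but `T(b,a) = b > 0 = T(c,a)` — and hence not a t-norm on `L₁`. -/
theorem stmt_13 {L : Type*} [Lattice L] [BoundedOrder L] (a b c : L)
    (hb : ⊥ < b) (hba : b < a) (ha1 : a < ⊤) (hbc : b < c) (hc1 : c < ⊤)
    (hac : ¬ a ≤ c) (hca : ¬ c ≤ a)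
    (hcarrier : ∀ x : L, x = ⊥ ∨ x = b ∨ x = a ∨ x = c ∨ x = ⊤)
    (T : L → L → L)
    (hT0 : ∀ x, T x ⊥ = ⊥ ∧ T ⊥ x = ⊥)
    (hT1 : ∀ x, T x ⊤ = x ∧ T ⊤ x = x)
    (hTbb : T b b = ⊥) (hTba : T b a = b) (hTab : T a b = b)
    (hTbc : T b c = ⊥) (hTcb : T c b = ⊥)
    (hTaa : T a a = a) (hTac : T a c = ⊥) (hTca : T c a = ⊥)
    (hTcc : T c c = ⊥) :
    (b ≤ c ∧ T c a < T b a) ∧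
    ¬ (∀ x y z : L, x ≤ y → T x z ≤ T y z) ∧
    ¬ ((∀ x y, T x y = T y x) ∧ (∀ x y z, T (T x y) z = T x (T y z)) ∧
        (∀ x y z : L, x ≤ y → T x z ≤ T y z) ∧ (∀ x, T ⊤ x = x)) := by
  have hmono : ¬ (∀ x y z : L, x ≤ y → T x z ≤ T y z) := by
    intro h
    have := h b c a hbc.le
    rw [hTba, hTca] at this
    exact absurd (le_antisymm this bot_le) hb.ne'
  exact ⟨⟨hbc.le, by rw [hTba, hTca]; exact hb⟩, hmono,
    fun ⟨_, _, hm, _⟩ => hmono hm⟩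
end

section
/- Let L be a bounded lattice and a ∈ L \ {0,1} such that every element of L is comparable with a (I_a = ∅). Let T₁ and T₂ be t-subnorms on [a,1] and [0,a] respectively. Then the ordinal sum T : L² → L defined by T(x,y) = T₁(x,y) for x,y ∈ [a,1); T₂(x,y) for x,y ∈ [0,a); x ∧ y for (x,y) ∈ ([0,a)×[a,1)) ∪ ([a,1)×[0,a)) ∪ (L×{1}) ∪ ({1}×L); and T₂(x ∧ a, y ∧ a) otherwise, is a t-norm on L. -/
/-- if every element of `L` is comparable with `a` (`I_a = ∅`) and `T₁, T₂`
are t-subnorms on `[a,1]` and `[0,a]` respectively, then the ordinal sum is a t-norm on `L`. -/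
theorem stmt_16 {L : Type*} [Lattice L] [BoundedOrder L] (a : L)
    (ha0 : a ≠ ⊥) (ha1 : a ≠ ⊤) (T₁ T₂ : L → L → L)
    (hT₁mem : ∀ x y, a ≤ x → a ≤ y → a ≤ T₁ x y)
    (hT₁comm : ∀ x y, a ≤ x → a ≤ y → T₁ x y = T₁ y x)
    (hT₁assoc : ∀ x y z, a ≤ x → a ≤ y → a ≤ z → T₁ (T₁ x y) z = T₁ x (T₁ y z))
    (hT₁mono : ∀ x y z, a ≤ x → a ≤ y → a ≤ z → x ≤ y → T₁ x z ≤ T₁ y z ∧ T₁ z x ≤ T₁ z y)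
    (hT₁le : ∀ x y, a ≤ x → a ≤ y → T₁ x y ≤ x ⊓ y)
    (hT₂mem : ∀ x y, x ≤ a → y ≤ a → T₂ x y ≤ a)
    (hT₂comm : ∀ x y, x ≤ a → y ≤ a → T₂ x y = T₂ y x)
    (hT₂assoc : ∀ x y z, x ≤ a → y ≤ a → z ≤ a → T₂ (T₂ x y) z = T₂ x (T₂ y z))
    (hT₂mono : ∀ x y z, x ≤ a → y ≤ a → z ≤ a → x ≤ y → T₂ x z ≤ T₂ y z ∧ T₂ z x ≤ T₂ z y)
    (hT₂le : ∀ x y, x ≤ a → y ≤ a → T₂ x y ≤ x ⊓ y)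
    (hcomp : ∀ x : L, x ≤ a ∨ a ≤ x) :
    (∀ x y, ordinalSum a T₁ T₂ x y = ordinalSum a T₁ T₂ y x) ∧
    (∀ x y z, ordinalSum a T₁ T₂ (ordinalSum a T₁ T₂ x y) z
      = ordinalSum a T₁ T₂ x (ordinalSum a T₁ T₂ y z)) ∧
    (∀ x y z : L, x ≤ y → ordinalSum a T₁ T₂ x z ≤ ordinalSum a T₁ T₂ y z) ∧
    (∀ x, ordinalSum a T₁ T₂ ⊤ x = x) := by
  set F := ordinalSum a T₁ T₂ with hF
  have haT : a < ⊤ := lt_top_iff_ne_top.mpr ha1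
  have hE1 : ∀ y, F ⊤ y = y := by
    intro y
    simp only [hF, ordinalSum]
    rw [if_neg, if_neg, if_pos]
    · exact top_inf_eq y
    · right; right; right; rfl
    · rintro ⟨h, _⟩; exact not_top_lt h
    · rintro ⟨⟨_, h⟩, _⟩; exact lt_irrefl ⊤ h
  have hE2 : ∀ x, F x ⊤ = x := by
    intro x
    simp only [hF, ordinalSum]
    rw [if_neg, if_neg, if_pos]
    · exact inf_top_eq x
    · right; right; left; rfl
    · rintro ⟨_, h⟩; exact not_top_lt h
    · rintro ⟨_, _, h⟩; exact lt_irrefl ⊤ h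
  have hU : ∀ x y, a ≤ x → x < ⊤ → a ≤ y → y < ⊤ → F x y = T₁ x y := by
    intro x y hx1 hx2 hy1 hy2
    simp only [hF, ordinalSum]
    rw [if_pos ⟨⟨hx1, hx2⟩, ⟨hy1, hy2⟩⟩]
  have hD : ∀ x y, x < a → y < a → F x y = T₂ x y := by
    intro x y hx hy
    simp only [hF, ordinalSum]
    rw [if_neg, if_pos ⟨hx, hy⟩]
    rintro ⟨⟨h, _⟩, _⟩; exact lt_irrefl a (lt_of_le_of_lt h hx)
  have hDU : ∀ x y, x < a → a ≤ y → y < ⊤ → F x y = x := by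
    intro x y hx hy1 hy2
    simp only [hF, ordinalSum]
    rw [if_neg, if_neg, if_pos (Or.inl ⟨hx, hy1, hy2⟩)]
    · exact inf_eq_left.mpr (hx.le.trans hy1)
    · rintro ⟨_, h⟩; exact lt_irrefl a (lt_of_le_of_lt hy1 h)
    · rintro ⟨⟨h, _⟩, _⟩; exact lt_irrefl a (lt_of_le_of_lt h hx)
  have hUD : ∀ x y, a ≤ x → x < ⊤ → y < a → F x y = y := by
    intro x y hx1 hx2 hy
    simp only [hF, ordinalSum]
    rw [if_neg, if_neg, if_pos (Or.inr (Or.inl ⟨⟨hx1, hx2⟩, hy⟩))]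
    · exact inf_eq_right.mpr (hy.le.trans hx1)
    · rintro ⟨h, _⟩; exact lt_irrefl a (lt_of_le_of_lt hx1 h)
    · rintro ⟨_, h, _⟩; exact lt_irrefl a (lt_of_le_of_lt h hy)
  have tri : ∀ x : L, x = ⊤ ∨ (a ≤ x ∧ x < ⊤) ∨ x < a := by
    intro x
    rcases hcomp x with h | h
    · rcases eq_or_lt_of_le h with h' | h'
      · exact Or.inr (Or.inl ⟨h'.ge, h' ▸ haT⟩)
      · exact Or.inr (Or.inr h')
    · rcases eq_or_lt_of_le (le_top : x ≤ ⊤) with h' | h'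
      · exact Or.inl h'
      · exact Or.inr (Or.inl ⟨h, h'⟩)
  have hT₁U : ∀ x y, a ≤ x → x < ⊤ → a ≤ y → y < ⊤ → a ≤ T₁ x y ∧ T₁ x y < ⊤ :=
    fun x y hx1 hx2 hy1 hy2 =>
      ⟨hT₁mem x y hx1 hy1, lt_of_le_of_lt ((hT₁le x y hx1 hy1).trans inf_le_left) hx2⟩
  have hT₂D : ∀ x y, x < a → y < a → T₂ x y < a :=
    fun x y hx hy => lt_of_le_of_lt ((hT₂le x y hx.le hy.le).trans inf_le_left) hx
  have hle : ∀ x y, F x y ≤ x ⊓ y := by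
    intro x y
    simp only [hF, ordinalSum]
    split_ifs with h1 h2 h3
    · exact hT₁le x y h1.1.1 h1.2.1
    · exact hT₂le x y h2.1.le h2.2.le
    · exact le_refl _
    · exact le_inf ((hT₂le _ _ inf_le_right inf_le_right).trans (inf_le_left.trans inf_le_left))
        ((hT₂le _ _ inf_le_right inf_le_right).trans (inf_le_right.trans inf_le_left))
  refine ⟨?_, ?_, ?_, fun x => hE1 x⟩
  · -- commutativity
    intro x y
    rcases tri x with rfl | ⟨hx1, hx2⟩ | hx <;> rcases tri y with rfl | ⟨hy1, hy2⟩ | hy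
    · rfl
    · rw [hE1, hE2]
    · rw [hE1, hE2]
    · rw [hE2, hE1]
    · rw [hU x y hx1 hx2 hy1 hy2, hU y x hy1 hy2 hx1 hx2]; exact hT₁comm x y hx1 hy1
    · rw [hUD x y hx1 hx2 hy, hDU y x hy hx1 hx2]
    · rw [hE2, hE1]
    · rw [hDU x y hx hy1 hy2, hUD y x hy1 hy2 hx]
    · rw [hD x y hx hy, hD y x hy hx]; exact hT₂comm x y hx.le hy.le
  · -- associativity
    intro x y z
    rcases tri x with rfl | ⟨hx1, hx2⟩ | hx
    · rw [hE1, hE1]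
    · rcases tri y with rfl | ⟨hy1, hy2⟩ | hy
      · rw [hE2, hE1]
      · rcases tri z with rfl | ⟨hz1, hz2⟩ | hz
        · rw [hE2, hE2]
        · -- UUU
          obtain ⟨h1, h2⟩ := hT₁U x y hx1 hx2 hy1 hy2
          obtain ⟨h3, h4⟩ := hT₁U y z hy1 hy2 hz1 hz2
          rw [hU x y hx1 hx2 hy1 hy2, hU _ z h1 h2 hz1 hz2, hU y z hy1 hy2 hz1 hz2,
            hU x _ hx1 hx2 h3 h4]
          exact hT₁assoc x y z hx1 hy1 hz1
        · -- UUD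
          obtain ⟨h1, h2⟩ := hT₁U x y hx1 hx2 hy1 hy2
          rw [hU x y hx1 hx2 hy1 hy2, hUD _ z h1 h2 hz, hUD y z hy1 hy2 hz,
            hUD x z hx1 hx2 hz]
      · rcases tri z with rfl | ⟨hz1, hz2⟩ | hz
        · rw [hE2, hE2]
        · -- UDU
          rw [hUD x y hx1 hx2 hy, hDU y z hy hz1 hz2, hUD x y hx1 hx2 hy]
        · -- UDD
          rw [hUD x y hx1 hx2 hy, hD y z hy hz, hUD x _ hx1 hx2 (hT₂D y z hy hz)]
    · rcases tri y with rfl | ⟨hy1, hy2⟩ | hy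
      · rw [hE2, hE1]
      · rcases tri z with rfl | ⟨hz1, hz2⟩ | hz
        · rw [hE2, hE2]
        · -- DUU
          obtain ⟨h3, h4⟩ := hT₁U y z hy1 hy2 hz1 hz2
          rw [hDU x y hx hy1 hy2, hDU x z hx hz1 hz2, hU y z hy1 hy2 hz1 hz2,
            hDU x _ hx h3 h4]
        · -- DUD
          rw [hDU x y hx hy1 hy2, hUD y z hy1 hy2 hz]
      · rcases tri z with rfl | ⟨hz1, hz2⟩ | hz
        · rw [hE2, hE2]
        · -- DDU
          rw [hD x y hx hy, hDU _ z (hT₂D x y hx hy) hz1 hz2, hDU y z hy hz1 hz2,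
            hD x y hx hy]
        · -- DDD
          rw [hD x y hx hy, hD _ z (hT₂D x y hx hy) hz, hD y z hy hz,
            hD x _ hx (hT₂D y z hy hz)]
          exact hT₂assoc x y z hx.le hy.le hz.le
  · -- monotonicity
    intro x y z hxy
    rcases tri z with rfl | ⟨hz1, hz2⟩ | hz
    · rw [hE2, hE2]; exact hxy
    · rcases tri y with rfl | ⟨hy1, hy2⟩ | hy
      · rw [hE1]; exact (hle x z).trans inf_le_right
      · rw [hU y z hy1 hy2 hz1 hz2]
        rcases tri x with rfl | ⟨hx1, hx2⟩ | hx
        · exact absurd (hxy.trans_lt hy2) (lt_irrefl ⊤)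
        · rw [hU x z hx1 hx2 hz1 hz2]
          exact (hT₁mono x y z hx1 hy1 hz1 hxy).1
        · rw [hDU x z hx hz1 hz2]
          exact hx.le.trans (hT₁mem y z hy1 hz1)
      · rw [hDU y z hy hz1 hz2, hDU x z (hxy.trans_lt hy) hz1 hz2]
        exact hxy
    · rcases tri y with rfl | ⟨hy1, hy2⟩ | hy
      · rw [hE1]; exact (hle x z).trans inf_le_right
      · rw [hUD y z hy1 hy2 hz]
        exact (hle x z).trans inf_le_right
      · rw [hD y z hy hz, hD x z (hxy.trans_lt hy) hz]
        exact (hT₂mono x y z (hxy.trans_lt hy).le hy.le hz.le hxy).1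
end

section
/- Let L be a bounded lattice, a ∈ L \ {0,1}, and T₁, T₂ t-norms on [a,1] and [0,a] respectively. Then the ordinal sum T : L² → L defined by T(x,y) = T₁(x,y) for x,y ∈ [a,1); T₂(x,y) for x,y ∈ [0,a); x ∧ y for (x,y) ∈ ([0,a)×[a,1)) ∪ ([a,1)×[0,a)) ∪ (L×{1}) ∪ ({1}×L); and T₂(x ∧ a, y ∧ a) otherwise, is a t-norm on L. -/
/-- Ertuğrul–Yeşilyurt: if `T₁` and `T₂` are t-norms on `[a,1]` and `[0,a]`
(i.e. t-subnorms with neutral elements `1` and `a` respectively), then their ordinal sum is a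
t-norm on `L`, with no condition on elements incomparable with `a`. -/
theorem stmt_19 {L : Type*} [Lattice L] [BoundedOrder L] (a : L)
    (ha0 : a ≠ ⊥) (ha1 : a ≠ ⊤) (T₁ T₂ : L → L → L)
    (hT₁mem : ∀ x y, a ≤ x → a ≤ y → a ≤ T₁ x y)
    (hT₁comm : ∀ x y, a ≤ x → a ≤ y → T₁ x y = T₁ y x)
    (hT₁assoc : ∀ x y z, a ≤ x → a ≤ y → a ≤ z → T₁ (T₁ x y) z = T₁ x (T₁ y z))
    (hT₁mono : ∀ x y z, a ≤ x → a ≤ y → a ≤ z → x ≤ y → T₁ x z ≤ T₁ y z ∧ T₁ z x ≤ T₁ z y)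
    (hT₁le : ∀ x y, a ≤ x → a ≤ y → T₁ x y ≤ x ⊓ y)
    (hT₂mem : ∀ x y, x ≤ a → y ≤ a → T₂ x y ≤ a)
    (hT₂comm : ∀ x y, x ≤ a → y ≤ a → T₂ x y = T₂ y x)
    (hT₂assoc : ∀ x y z, x ≤ a → y ≤ a → z ≤ a → T₂ (T₂ x y) z = T₂ x (T₂ y z))
    (hT₂mono : ∀ x y z, x ≤ a → y ≤ a → z ≤ a → x ≤ y → T₂ x z ≤ T₂ y z ∧ T₂ z x ≤ T₂ z y)
    (hT₂le : ∀ x y, x ≤ a → y ≤ a → T₂ x y ≤ x ⊓ y)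
    (hT₁one : ∀ x, a ≤ x → T₁ ⊤ x = x)
    (hT₂one : ∀ x, x ≤ a → T₂ a x = x) :
    (∀ x y, ordinalSum a T₁ T₂ x y = ordinalSum a T₁ T₂ y x) ∧
    (∀ x y z, ordinalSum a T₁ T₂ (ordinalSum a T₁ T₂ x y) z
      = ordinalSum a T₁ T₂ x (ordinalSum a T₁ T₂ y z)) ∧
    (∀ x y z : L, x ≤ y → ordinalSum a T₁ T₂ x z ≤ ordinalSum a T₁ T₂ y z) ∧
    (∀ x, ordinalSum a T₁ T₂ ⊤ x = x) := by
  -- `a` is a right neutral element for `T₂` on `[0,a]`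
  have hT₂one' : ∀ u, u ≤ a → T₂ u a = u := fun u hu => by
    rw [hT₂comm u a hu le_rfl, hT₂one u hu]
  -- closed form: top on the left
  have topL : ∀ y, ordinalSum a T₁ T₂ ⊤ y = y := by
    intro y
    have h1 : ¬((a ≤ (⊤ : L) ∧ (⊤ : L) < ⊤) ∧ (a ≤ y ∧ y < ⊤)) :=
      fun h => absurd h.1.2 (lt_irrefl _)
    have h2 : ¬((⊤ : L) < a ∧ y < a) := fun h => absurd h.1 not_top_lt
    have h3 : ((⊤ : L) < a ∧ a ≤ y ∧ y < ⊤) ∨ ((a ≤ (⊤ : L) ∧ (⊤ : L) < ⊤) ∧ y < a)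
        ∨ y = ⊤ ∨ (⊤ : L) = ⊤ := Or.inr (Or.inr (Or.inr rfl))
    simp only [ordinalSum, if_neg h1, if_neg h2, if_pos h3, top_inf_eq]
  -- closed form: top on the right
  have topR : ∀ x, ordinalSum a T₁ T₂ x ⊤ = x := by
    intro x
    have h1 : ¬((a ≤ x ∧ x < ⊤) ∧ (a ≤ (⊤ : L) ∧ (⊤ : L) < ⊤)) :=
      fun h => absurd h.2.2 (lt_irrefl _)
    have h2 : ¬(x < a ∧ (⊤ : L) < a) := fun h => absurd h.2 not_top_lt
    have h3 : (x < a ∧ a ≤ (⊤ : L) ∧ (⊤ : L) < ⊤) ∨ ((a ≤ x ∧ x < ⊤) ∧ (⊤ : L) < a)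
        ∨ (⊤ : L) = ⊤ ∨ x = ⊤ := Or.inr (Or.inr (Or.inl rfl))
    simp only [ordinalSum, if_neg h1, if_neg h2, if_pos h3, inf_top_eq]
  -- closed form: both arguments in `[a, ⊤)`
  have hAA : ∀ x y, a ≤ x → x ≠ ⊤ → a ≤ y → y ≠ ⊤ → ordinalSum a T₁ T₂ x y = T₁ x y := by
    intro x y hax hx hay hy
    simp only [ordinalSum,
      if_pos (show (a ≤ x ∧ x < ⊤) ∧ (a ≤ y ∧ y < ⊤) from
        ⟨⟨hax, lt_top_iff_ne_top.mpr hx⟩, hay, lt_top_iff_ne_top.mpr hy⟩)]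
  -- closed form: the "low" cases
  have hlow : ∀ x y, x ≠ ⊤ → y ≠ ⊤ → ¬(a ≤ x ∧ a ≤ y) →
      ordinalSum a T₁ T₂ x y = T₂ (x ⊓ a) (y ⊓ a) := by
    intro x y hx hy h
    simp only [ordinalSum, if_neg (show ¬((a ≤ x ∧ x < ⊤) ∧ (a ≤ y ∧ y < ⊤)) from
      fun hc => h ⟨hc.1.1, hc.2.1⟩)]
    split_ifs with h2 h3
    · rw [inf_eq_left.mpr h2.1.le, inf_eq_left.mpr h2.2.le]
    · rcases h3 with ⟨hxa, hya, _⟩ | ⟨⟨hax, _⟩, hya⟩ | he | he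
      · rw [inf_eq_left.mpr (hxa.le.trans hya), inf_eq_left.mpr hxa.le,
          inf_eq_right.mpr hya, hT₂one' x hxa.le]
      · rw [inf_eq_right.mpr (hya.le.trans hax), inf_eq_right.mpr hax,
          inf_eq_left.mpr hya.le, hT₂one y hya.le]
      · exact absurd he hy
      · exact absurd he hx
    · rfl
  -- the low value is `< a`
  have hlt : ∀ x y : L, ¬(a ≤ x ∧ a ≤ y) → T₂ (x ⊓ a) (y ⊓ a) < a := by
    intro x y h
    rcases not_and_or.mp h with h | h
    · exact lt_of_le_of_lt ((hT₂le _ _ inf_le_right inf_le_right).trans inf_le_left)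
        (inf_le_right.lt_of_ne fun he => h (inf_eq_right.mp he))
    · exact lt_of_le_of_lt ((hT₂le _ _ inf_le_right inf_le_right).trans inf_le_right)
        (inf_le_right.lt_of_ne fun he => h (inf_eq_right.mp he))
  -- the ordinal sum is below the meet
  have hSle : ∀ x y, ordinalSum a T₁ T₂ x y ≤ x ⊓ y := by
    intro x y
    rw [ordinalSum]
    split_ifs with h1 h2 h3
    · exact hT₁le _ _ h1.1.1 h1.2.1
    · exact hT₂le _ _ h2.1.le h2.2.le
    · exact le_rfl
    · exact (hT₂le _ _ inf_le_right inf_le_right).trans (inf_le_inf inf_le_left inf_le_left)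
  refine ⟨?_, ?_, ?_, topL⟩
  -- commutativity
  · intro x y
    by_cases hx : x = ⊤
    · subst hx; rw [topL, topR]
    by_cases hy : y = ⊤
    · subst hy; rw [topL, topR]
    by_cases h : a ≤ x ∧ a ≤ y
    · rw [hAA x y h.1 hx h.2 hy, hAA y x h.2 hy h.1 hx, hT₁comm x y h.1 h.2]
    · rw [hlow x y hx hy h, hlow y x hy hx (fun hc => h ⟨hc.2, hc.1⟩),
        hT₂comm _ _ inf_le_right inf_le_right]
  -- associativity
  · intro x y z
    by_cases hx : x = ⊤
    · subst hx; rw [topL, topL]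
    by_cases hz : z = ⊤
    · subst hz; rw [topR, topR]
    by_cases hy : y = ⊤
    · subst hy; rw [topR, topL]
    by_cases hxy : a ≤ x ∧ a ≤ y
    · by_cases haz : a ≤ z
      · rw [hAA x y hxy.1 hx hxy.2 hy, hAA y z hxy.2 hy haz hz,
          hAA _ z (hT₁mem x y hxy.1 hxy.2)
            (ne_top_of_le_ne_top hx ((hT₁le x y hxy.1 hxy.2).trans inf_le_left)) haz hz,
          hAA x _ hxy.1 hx (hT₁mem y z hxy.2 haz)
            (ne_top_of_le_ne_top hy ((hT₁le y z hxy.2 haz).trans inf_le_left))]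
        exact hT₁assoc x y z hxy.1 hxy.2 haz
      · have hv := hlt y z (fun hc => haz hc.2)
        have hvne : T₂ (y ⊓ a) (z ⊓ a) ≠ ⊤ := fun he => absurd (he ▸ hv) not_top_lt
        rw [hAA x y hxy.1 hx hxy.2 hy, hlow y z hy hz (fun hc => haz hc.2),
          hlow _ z (ne_top_of_le_ne_top hx ((hT₁le x y hxy.1 hxy.2).trans inf_le_left)) hz
            (fun hc => haz hc.2),
          hlow x _ hx hvne (fun hc => hv.not_ge hc.2),
          inf_eq_right.mpr (hT₁mem x y hxy.1 hxy.2), inf_eq_right.mpr hxy.1,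
          inf_eq_left.mpr hv.le, inf_eq_right.mpr hxy.2,
          hT₂one _ inf_le_right, hT₂one _ inf_le_right]
    · have hwlt := hlt x y hxy
      have hwne : T₂ (x ⊓ a) (y ⊓ a) ≠ ⊤ := fun he => absurd (he ▸ hwlt) not_top_lt
      rw [hlow x y hx hy hxy,
        hlow _ z hwne hz (fun hc => hwlt.not_ge hc.1),
        inf_eq_left.mpr hwlt.le]
      by_cases hyz : a ≤ y ∧ a ≤ z
      · have hax : ¬ a ≤ x := fun h => hxy ⟨h, hyz.1⟩
        rw [hAA y z hyz.1 hy hyz.2 hz,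
          hlow x _ hx (ne_top_of_le_ne_top hy ((hT₁le y z hyz.1 hyz.2).trans inf_le_left))
            (fun hc => hax hc.1),
          inf_eq_right.mpr hyz.1, inf_eq_right.mpr hyz.2,
          inf_eq_right.mpr (hT₁mem y z hyz.1 hyz.2),
          hT₂one' (x ⊓ a) inf_le_right, hT₂one' (x ⊓ a) inf_le_right]
      · have hv := hlt y z hyz
        have hvne : T₂ (y ⊓ a) (z ⊓ a) ≠ ⊤ := fun he => absurd (he ▸ hv) not_top_lt
        rw [hlow y z hy hz hyz, hlow x _ hx hvne (fun hc => hv.not_ge hc.2),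
          inf_eq_left.mpr hv.le]
        exact hT₂assoc _ _ _ inf_le_right inf_le_right inf_le_right
  -- monotonicity
  · intro x y z hxy
    by_cases hz : z = ⊤
    · subst hz; rw [topR, topR]; exact hxy
    by_cases hy : y = ⊤
    · subst hy; rw [topL]; exact (hSle x z).trans inf_le_right
    have hx : x ≠ ⊤ := fun h => hy (top_le_iff.mp (h ▸ hxy))
    by_cases hax : a ≤ x
    · have hay : a ≤ y := hax.trans hxy
      by_cases haz : a ≤ z
      · rw [hAA x z hax hx haz hz, hAA y z hay hy haz hz]
        exact (hT₁mono x y z hax hay haz hxy).1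
      · rw [hlow x z hx hz (fun hc => haz hc.2), hlow y z hy hz (fun hc => haz hc.2),
          inf_eq_right.mpr hax, inf_eq_right.mpr hay]
    · by_cases hyz : a ≤ y ∧ a ≤ z
      · rw [hAA y z hyz.1 hy hyz.2 hz, hlow x z hx hz (fun hc => hax hc.1)]
        exact (hlt x z (fun hc => hax hc.1)).le.trans (hT₁mem y z hyz.1 hyz.2)
      · rw [hlow x z hx hz (fun hc => hax hc.1), hlow y z hy hz hyz]
        exact (hT₂mono _ _ _ inf_le_right inf_le_right inf_le_right (inf_le_inf_right a hxy)).1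
end
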